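/- arXiv:1503.02380 — 9 statements merged into one kernel-verified Lean document; each statement's English description precedes it below -/
import Mathlib

section
/- There exists a sequence of finite simple graphs (G_n) such that the ratio scc'(G_n)/scc(G_n) tends to infinity as n tends to infinity. -/
open Finset

/-- A clique covering of `G`: a finite family of cliques covering every edge. -/
def IsCliqueCover {V : Type*} (G : SimpleGraph V) (𝒞 : Finset (Finset V)) : Prop :=
  (∀ C ∈ 𝒞, G.IsClique (C : Set V)) ∧
  ∀ u v, G.Adj u v → ∃ C ∈ 𝒞, u ∈ C ∧ v ∈ C

/-- A clique partition of `G`: every edge lies in exactly one clique of the family. -/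
def IsCliquePartition {V : Type*} (G : SimpleGraph V) (𝒞 : Finset (Finset V)) : Prop :=
  (∀ C ∈ 𝒞, G.IsClique (C : Set V)) ∧
  ∀ u v, G.Adj u v → ∃! C, C ∈ 𝒞 ∧ u ∈ C ∧ v ∈ C

/-- The sigma clique cover number: minimum total size of cliques in a clique covering. -/
noncomputable def scc {V : Type*} (G : SimpleGraph V) : ℕ :=
  sInf {k | ∃ 𝒞, IsCliqueCover G 𝒞 ∧ ∑ C ∈ 𝒞, C.card = k}

/-- The sigma clique partition number: minimum total size of cliques in a clique partition. -/
noncomputable def scp {V : Type*} (G : SimpleGraph V) : ℕ :=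
  sInf {k | ∃ 𝒞, IsCliquePartition G 𝒞 ∧ ∑ C ∈ 𝒞, C.card = k}

/-- The clique cover number: minimum number of cliques in a clique covering. -/
noncomputable def cc {V : Type*} (G : SimpleGraph V) : ℕ :=
  sInf {k | ∃ 𝒞, IsCliqueCover G 𝒞 ∧ 𝒞.card = k}

/-- The clique partition number: minimum number of cliques in a clique partition. -/
noncomputable def cp {V : Type*} (G : SimpleGraph V) : ℕ :=
  sInf {k | ∃ 𝒞, IsCliquePartition G 𝒞 ∧ 𝒞.card = k}

/-- `scc'`: the minimum total size of cliques over clique coverings achieving `cc G`. -/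
noncomputable def scc' {V : Type*} (G : SimpleGraph V) : ℕ :=
  sInf {k | ∃ 𝒞, IsCliqueCover G 𝒞 ∧ 𝒞.card = cc G ∧ ∑ C ∈ 𝒞, C.card = k}

/-!
Take a clique `X` of size `m`, two more `m`-cliques `A` and `B`, each completely joined to `X` and
joined to each other by a perfect matching, and two apices adjacent to all of `A` and all of `B`
respectively. The `m` matching edges and the two apex edges lie in pairwise distinct maximal
cliques, so `cc = m + 2`, and a cover by `m + 2` cliques consists of exactly one clique through
each of these edges. The edges between `X` and `A` can then only be covered by the cliques through
the matching edges, so each of those contains `X`, and `scc' ≥ m²`. On the other hand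
`X ∪ A`, `X ∪ B`, the two apex cliques and the `m` matching edges cover the graph with total size
`8m + 2`. Hence `scc' / scc ≥ m / 10`.
-/

section CliqueCover

variable {V : Type*} {G : SimpleGraph V}

lemma IsCliqueCover.scc_le {𝒞 : Finset (Finset V)} (h : IsCliqueCover G 𝒞) :
    scc G ≤ ∑ C ∈ 𝒞, C.card :=
  Nat.sInf_le ⟨𝒞, h, rfl⟩

lemma IsCliqueCover.scc_pos {𝒞 : Finset (Finset V)} (h : IsCliqueCover G 𝒞) {u v : V}
    (huv : G.Adj u v) : 0 < scc G := by
  obtain ⟨𝒞', h', hsum⟩ : scc G ∈ {k | ∃ 𝒞, IsCliqueCover G 𝒞 ∧ ∑ C ∈ 𝒞, C.card = k} :=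
    Nat.sInf_mem ⟨_, 𝒞, h, rfl⟩
  obtain ⟨C, hC, hu, -⟩ := h'.2 u v huv
  rw [← hsum]
  exact (card_pos.2 ⟨u, hu⟩).trans_le (single_le_sum (fun _ _ => Nat.zero_le _) hC)

lemma IsCliqueCover.cc_eq {𝒞₀ : Finset (Finset V)} (h₀ : IsCliqueCover G 𝒞₀)
    (hmin : ∀ 𝒞, IsCliqueCover G 𝒞 → 𝒞₀.card ≤ 𝒞.card) : cc G = 𝒞₀.card :=
  le_antisymm (Nat.sInf_le ⟨𝒞₀, h₀, rfl⟩)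
    (le_csInf ⟨_, 𝒞₀, h₀, rfl⟩ (by rintro _ ⟨𝒞, h, rfl⟩; exact hmin 𝒞 h))

lemma IsCliqueCover.le_scc' {𝒞₀ : Finset (Finset V)} (h₀ : IsCliqueCover G 𝒞₀)
    (hcard : 𝒞₀.card = cc G) {w : ℕ}
    (hw : ∀ 𝒞, IsCliqueCover G 𝒞 → 𝒞.card = cc G → w ≤ ∑ C ∈ 𝒞, C.card) : w ≤ scc' G :=
  le_csInf ⟨_, 𝒞₀, h₀, hcard, rfl⟩ (by rintro _ ⟨𝒞, h, hc, rfl⟩; exact hw 𝒞 h hc)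

def IsCliqueIndependent {ι : Type*} (G : SimpleGraph V) (e : ι → V × V) : Prop :=
  (∀ t, G.Adj (e t).1 (e t).2) ∧
    ∀ t t' (C : Finset V), G.IsClique (C : Set V) → (e t).1 ∈ C → (e t).2 ∈ C →
      (e t').1 ∈ C → (e t').2 ∈ C → t = t'

lemma IsCliqueCover.exists_injective {ι : Type*} {𝒞 : Finset (Finset V)} {e : ι → V × V}
    (h : IsCliqueCover G 𝒞) (he : IsCliqueIndependent G e) :
    ∃ f : ι → Finset V, f.Injective ∧ ∀ t, f t ∈ 𝒞 ∧ (e t).1 ∈ f t ∧ (e t).2 ∈ f t := by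
  choose f hf using fun t => h.2 _ _ (he.1 t)
  refine ⟨f, fun t t' htt' => ?_, hf⟩
  exact he.2 t t' (f t) (h.1 _ (hf t).1) (hf t).2.1 (hf t).2.2 (htt' ▸ (hf t').2.1)
    (htt' ▸ (hf t').2.2)

lemma IsCliqueCover.card_le {ι : Type*} [Fintype ι] {𝒞 : Finset (Finset V)} {e : ι → V × V}
    (h : IsCliqueCover G 𝒞) (he : IsCliqueIndependent G e) : Fintype.card ι ≤ 𝒞.card := by
  obtain ⟨f, hf, hmem⟩ := h.exists_injective he
  exact card_le_card_of_injOn f (fun t _ => (hmem t).1) hf.injOn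

lemma isCliqueCover_image [DecidableEq V] {ι : Type*} [Fintype ι] (K : ι → Finset V)
    (hK : ∀ t, G.IsClique (K t : Set V)) (hcov : ∀ u v, G.Adj u v → ∃ t, u ∈ K t ∧ v ∈ K t) :
    IsCliqueCover G (univ.image K) := by
  refine ⟨fun C hC => ?_, fun u v huv => ?_⟩
  · obtain ⟨t, -, rfl⟩ := mem_image.1 hC
    exact hK t
  · obtain ⟨t, ht⟩ := hcov u v huv
    exact ⟨K t, mem_image_of_mem _ (mem_univ t), ht⟩

end CliqueCover

namespace SccGap

-- `x i ∈ X`; `y false i ∈ A` and `y true i ∈ B` are matched; `w s` is the apex of side `s`.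
inductive Vertex (m : ℕ) : Type
  | x : Fin m → Vertex m
  | y : Bool → Fin m → Vertex m
  | w : Bool → Vertex m
  deriving DecidableEq, Fintype

open Vertex

variable {m : ℕ}

def adj : Vertex m → Vertex m → Prop
  | x i, x j => i ≠ j
  | x _, y _ _ => True
  | y _ _, x _ => True
  | y s i, y t j => (s = t ∧ i ≠ j) ∨ (s ≠ t ∧ i = j)
  | y s _, w t => s = t
  | w s, y t _ => s = t
  | _, _ => False

def graph (m : ℕ) : SimpleGraph (Vertex m) where
  Adj := adj
  symm := ⟨fun u v => by cases u <;> cases v <;> simp only [adj] <;> grind⟩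
  loopless := ⟨fun v => by cases v <;> simp [adj]⟩

@[simp] lemma graph_adj {u v : Vertex m} : (graph m).Adj u v ↔ adj u v := Iff.rfl

def core (m : ℕ) : Finset (Vertex m) := univ.image x

def side (m : ℕ) (s : Bool) : Finset (Vertex m) := univ.image (y s)

@[simp] lemma mem_core {v : Vertex m} : v ∈ core m ↔ ∃ i, x i = v := by simp [core]
@[simp] lemma mem_side {v : Vertex m} {s : Bool} : v ∈ side m s ↔ ∃ i, y s i = v := by
  simp [side]

lemma card_core : (core m).card = m := by
  simp [core, card_image_of_injective _ (fun _ _ h => Vertex.x.inj h)]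

lemma card_side (s : Bool) : (side m s).card = m := by
  simp [side, card_image_of_injective _ (fun _ _ h => (Vertex.y.inj h).2)]

def maxClique : Fin m ⊕ Bool → Finset (Vertex m)
  | .inl i => insert (y false i) (insert (y true i) (core m))
  | .inr s => insert (w s) (side m s)

def privateEdge [NeZero m] : Fin m ⊕ Bool → Vertex m × Vertex m
  | .inl i => (y false i, y true i)
  | .inr s => (w s, y s 0)

lemma isClique_maxClique (t : Fin m ⊕ Bool) :
    (graph m).IsClique (maxClique t : Set (Vertex m)) := by
  intro u hu v hv huv
  rcases t with i | s <;>
    simp only [maxClique, coe_insert, Set.mem_insert_iff, mem_coe, mem_core, mem_side] at hu hv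
  · rcases hu with rfl | rfl | ⟨j, rfl⟩ <;> rcases hv with rfl | rfl | ⟨k, rfl⟩ <;> simp_all [adj]
  · rcases hu with rfl | ⟨j, rfl⟩ <;> rcases hv with rfl | ⟨k, rfl⟩ <;> simp_all [adj]

lemma subset_maxClique [NeZero m] (t : Fin m ⊕ Bool) {C : Finset (Vertex m)}
    (hC : (graph m).IsClique (C : Set (Vertex m))) (h₁ : (privateEdge t).1 ∈ C)
    (h₂ : (privateEdge t).2 ∈ C) : C ⊆ maxClique t := by
  intro v hv
  have hadj : ∀ u ∈ C, v ≠ u → adj v u := fun u hu hne => hC (mem_coe.2 hv) (mem_coe.2 hu) hne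
  have hadj₁ := hadj _ h₁
  have hadj₂ := hadj _ h₂
  rcases t with i | s
  · cases v with
    | y s j => cases s <;> simp_all [privateEdge, maxClique, adj]
    | _ => simp_all [privateEdge, maxClique, adj]
  · cases v <;> simp_all [privateEdge, maxClique, adj]

lemma eq_of_privateEdge_mem_maxClique [NeZero m] {t t' : Fin m ⊕ Bool}
    (h₁ : (privateEdge t').1 ∈ maxClique t) (h₂ : (privateEdge t').2 ∈ maxClique t) : t' = t := by
  rcases t with i | s <;> rcases t' with j | s' <;> simp_all [privateEdge, maxClique]

lemma isCliqueIndependent_privateEdge [NeZero m] :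
    IsCliqueIndependent (graph m) (privateEdge (m := m)) := by
  refine ⟨fun t => ?_, fun t t' C hC h₁ h₂ h₁' h₂' => ?_⟩
  · rcases t with i | s <;> simp [privateEdge, adj]
  · exact (eq_of_privateEdge_mem_maxClique (subset_maxClique t hC h₁ h₂ h₁')
      (subset_maxClique t hC h₁ h₂ h₂')).symm

def tightCover (m : ℕ) : Finset (Finset (Vertex m)) := univ.image maxClique

lemma isCliqueCover_tightCover : IsCliqueCover (graph m) (tightCover m) := by
  refine isCliqueCover_image _ isClique_maxClique fun u v huv => ?_
  cases u with
  | x i => cases v with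
    | x j => exact ⟨.inl i, by simp [maxClique]⟩
    | y s j => exact ⟨.inl j, by cases s <;> simp [maxClique]⟩
    | w s => exact huv.elim
  | y s i => cases v with
    | x j => exact ⟨.inl i, by cases s <;> simp [maxClique]⟩
    | y s' j =>
      rcases huv with ⟨rfl, -⟩ | ⟨hs, rfl⟩
      · exact ⟨.inr s, by simp [maxClique]⟩
      · exact ⟨.inl i, by cases s <;> cases s' <;> simp_all [maxClique]⟩
    | w s' => exact ⟨.inr s, by simp_all [maxClique, adj]⟩
  | w s => cases v with
    | y s' j => exact ⟨.inr s, by simp_all [maxClique, adj]⟩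
    | _ => exact huv.elim

lemma add_two_le_card [NeZero m] {𝒞 : Finset (Finset (Vertex m))}
    (h : IsCliqueCover (graph m) 𝒞) : m + 2 ≤ 𝒞.card := by
  simpa using h.card_le isCliqueIndependent_privateEdge

lemma card_tightCover [NeZero m] : (tightCover m).card = m + 2 :=
  le_antisymm (card_image_le.trans (by simp)) (add_two_le_card isCliqueCover_tightCover)

lemma cc_graph [NeZero m] : cc (graph m) = m + 2 := by
  rw [isCliqueCover_tightCover.cc_eq fun _ h => card_tightCover.trans_le (add_two_le_card h),
    card_tightCover]

lemma mul_self_le_sum_card [NeZero m] {𝒞 : Finset (Finset (Vertex m))}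
    (h : IsCliqueCover (graph m) 𝒞) (hcard : 𝒞.card = m + 2) : m * m ≤ ∑ C ∈ 𝒞, C.card := by
  obtain ⟨f, hf, hmem⟩ := h.exists_injective isCliqueIndependent_privateEdge
  have himage : univ.image f = 𝒞 :=
    eq_of_subset_of_card_le (image_subset_iff.2 fun t _ => (hmem t).1)
      (by simp [card_image_of_injective _ hf, hcard])
  have hsub (t : Fin m ⊕ Bool) : f t ⊆ maxClique t :=
    subset_maxClique t (h.1 _ (hmem t).1) (hmem t).2.1 (hmem t).2.2
  have hcore (i : Fin m) : core m ⊆ f (.inl i) := by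
    intro v hv
    obtain ⟨p, rfl⟩ := mem_core.1 hv
    obtain ⟨C, hC, hx, hy⟩ := h.2 (x p) (y false i) trivial
    rw [← himage] at hC
    obtain ⟨t, -, rfl⟩ := mem_image.1 hC
    have hxt := hsub t hx
    have hyt := hsub t hy
    rcases t with j | s <;> simp_all [maxClique]
  calc m * m = ∑ i : Fin m, (core m).card := by simp [card_core]
    _ ≤ ∑ i : Fin m, (f (.inl i)).card := sum_le_sum fun i _ => card_le_card (hcore i)
    _ ≤ ∑ t, (f t).card := by rw [Fintype.sum_sum_type]; exact Nat.le_add_right _ _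
    _ = ∑ C ∈ 𝒞, C.card := by rw [← himage, sum_image fun _ _ _ _ h => hf h]

lemma mul_self_le_scc'_graph [NeZero m] : m * m ≤ scc' (graph m) :=
  isCliqueCover_tightCover.le_scc' (by rw [card_tightCover, cc_graph])
    fun _ h hcard => mul_self_le_sum_card h (hcard.trans cc_graph)

def cheapClique : Fin m ⊕ Bool ⊕ Bool → Finset (Vertex m)
  | .inl i => {y false i, y true i}
  | .inr (.inl s) => core m ∪ side m s
  | .inr (.inr s) => maxClique (.inr s)

lemma isClique_cheapClique (t : Fin m ⊕ Bool ⊕ Bool) :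
    (graph m).IsClique (cheapClique t : Set (Vertex m)) := by
  rcases t with i | s | s
  · simp [cheapClique, adj]
  · intro u hu v hv huv
    simp only [cheapClique, coe_union, Set.mem_union, mem_coe, mem_core, mem_side] at hu hv
    rcases hu with ⟨j, rfl⟩ | ⟨j, rfl⟩ <;> rcases hv with ⟨k, rfl⟩ | ⟨k, rfl⟩ <;> simp_all [adj]
  · exact isClique_maxClique (.inr s)

def cheapCover (m : ℕ) : Finset (Finset (Vertex m)) := univ.image cheapClique

lemma isCliqueCover_cheapCover : IsCliqueCover (graph m) (cheapCover m) := by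
  refine isCliqueCover_image _ isClique_cheapClique fun u v huv => ?_
  cases u with
  | x i => cases v with
    | x j => exact ⟨.inr (.inl false), by simp [cheapClique]⟩
    | y s j => exact ⟨.inr (.inl s), by simp [cheapClique]⟩
    | w s => exact huv.elim
  | y s i => cases v with
    | x j => exact ⟨.inr (.inl s), by simp [cheapClique]⟩
    | y s' j =>
      rcases huv with ⟨rfl, -⟩ | ⟨hs, rfl⟩
      · exact ⟨.inr (.inl s), by simp [cheapClique]⟩
      · exact ⟨.inl i, by cases s <;> cases s' <;> simp_all [cheapClique]⟩
    | w s' => exact ⟨.inr (.inr s), by simp_all [cheapClique, maxClique, adj]⟩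
  | w s => cases v with
    | y s' j => exact ⟨.inr (.inr s), by simp_all [cheapClique, maxClique, adj]⟩
    | _ => exact huv.elim

lemma sum_card_cheapCover_le : ∑ C ∈ cheapCover m, C.card ≤ 8 * m + 2 := by
  have hrung (i : Fin m) : (cheapClique (.inl i)).card ≤ 2 := card_le_two
  have hside (s : Bool) : (cheapClique (.inr (.inl s))).card ≤ 2 * m :=
    (card_union_le (core m) (side m s)).trans (by rw [card_core, card_side]; omega)
  have hapex (s : Bool) : (cheapClique (.inr (.inr s))).card ≤ m + 1 :=
    (card_insert_le (w s) (side m s)).trans (by rw [card_side])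
  calc ∑ C ∈ cheapCover m, C.card ≤ ∑ t, (cheapClique t).card :=
        sum_image_le_of_nonneg fun _ _ => Nat.zero_le _
    _ ≤ m * 2 + ((2 * m + 2 * m) + ((m + 1) + (m + 1))) := by
        simp only [Fintype.sum_sum_type, Fintype.sum_bool]
        refine add_le_add ?_ (add_le_add (add_le_add (hside _) (hside _))
          (add_le_add (hapex _) (hapex _)))
        simpa using sum_le_sum fun i (_ : i ∈ univ) => hrung i
    _ = 8 * m + 2 := by ring

lemma scc_graph_le : scc (graph m) ≤ 8 * m + 2 :=
  isCliqueCover_cheapCover.scc_le.trans sum_card_cheapCover_le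

lemma scc_graph_pos [NeZero m] : 0 < scc (graph m) :=
  isCliqueCover_cheapCover.scc_pos (u := w true) (v := y true 0) rfl

lemma div_ten_le_scc'_div_scc [NeZero m] :
    (m : ℝ) / 10 ≤ (scc' (graph m) : ℝ) / scc (graph m) := by
  have hscc' : ((m * m : ℕ) : ℝ) ≤ scc' (graph m) := by exact_mod_cast mul_self_le_scc'_graph
  have hscc : (scc (graph m) : ℝ) ≤ 8 * m + 2 := by exact_mod_cast scc_graph_le
  have hpos : (0 : ℝ) < scc (graph m) := by exact_mod_cast scc_graph_pos
  have hm : (1 : ℝ) ≤ m := by exact_mod_cast NeZero.one_le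
  calc (m : ℝ) / 10 ≤ (m * m) / (8 * m + 2) := by
        rw [div_le_div_iff₀ (by norm_num) (by positivity)]
        nlinarith
    _ ≤ scc' (graph m) / scc (graph m) :=
        div_le_div₀ (by positivity) (by exact_mod_cast hscc') hpos hscc

end SccGap

/-- There is a sequence of finite simple graphs `Gₙ` with `scc'(Gₙ)/scc(Gₙ) → ∞`. -/
theorem stmt_0 :
    ∃ (W : ℕ → Type) (_ : ∀ n, Fintype (W n)) (G : ∀ n, SimpleGraph (W n)),
      Filter.Tendsto (fun n => (scc' (G n) : ℝ) / (scc (G n) : ℝ))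
        Filter.atTop Filter.atTop := by
  refine ⟨fun n => SccGap.Vertex (n + 1), fun _ => inferInstance,
    fun n => SccGap.graph (n + 1), ?_⟩
  refine Filter.tendsto_atTop_mono (fun n => SccGap.div_ten_le_scc'_div_scc) ?_
  exact ((tendsto_natCast_atTop_atTop.comp (Filter.tendsto_add_atTop_nat 1)).atTop_div_const
    (by norm_num))
end

section
/- For every positive integer n, the clique cover number of the graph G_n equals n + 2. -/
open Finset

/-- The vertex set of the graph `Gₙ`: `x₀`, `y₀`, `X = {x i}`, `Y = {y i}`, `Z = {z i}`. -/
inductive Vtx (n : ℕ) : Type where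
  | x0 : Vtx n
  | y0 : Vtx n
  | x : Fin n → Vtx n
  | y : Fin n → Vtx n
  | z : Fin n → Vtx n
  deriving DecidableEq, Fintype

/-- Membership in `X ∪ {x₀}`. -/
def inXx0 {n : ℕ} : Vtx n → Prop
  | .x0 => True
  | .x _ => True
  | _ => False

/-- Membership in `Y ∪ {y₀}`. -/
def inYy0 {n : ℕ} : Vtx n → Prop
  | .y0 => True
  | .y _ => True
  | _ => False

/-- Membership in `Z`. -/
def inZ {n : ℕ} : Vtx n → Prop
  | .z _ => True
  | _ => False

/-- Membership in `X ∪ Y`. -/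
def inXY {n : ℕ} : Vtx n → Prop
  | .x _ => True
  | .y _ => True
  | _ => False

/-- `xyPair u v` holds iff `u = x i` and `v = y i` for some `i`. -/
def xyPair {n : ℕ} : Vtx n → Vtx n → Prop
  | .x i, .y j => i = j
  | _, _ => False

/-- The graph `Gₙ`: `X ∪ {x₀}`, `Y ∪ {y₀}` and `Z` are cliques, every vertex of `Z` is
adjacent to every vertex of `X ∪ Y`, and `x i` is adjacent to `y j` iff `i = j`. -/
def Gn (n : ℕ) : SimpleGraph (Vtx n) where
  Adj u v := u ≠ v ∧ (inXx0 u ∧ inXx0 v ∨ inYy0 u ∧ inYy0 v ∨ inZ u ∧ inZ v ∨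
    inZ u ∧ inXY v ∨ inXY u ∧ inZ v ∨ xyPair u v ∨ xyPair v u)
  symm := ⟨by
    rintro u v ⟨h1, h2⟩
    exact ⟨h1.symm, by tauto⟩⟩
  loopless := ⟨fun u h => h.1 rfl⟩


/-! The cliques `X ∪ {x₀}`, `Y ∪ {y₀}` and `Z ∪ {xᵢ, yᵢ}` (`1 ≤ i ≤ n`) cover `Gₙ`. Conversely, the
`n + 2` edges `xᵢyᵢ`, `x₀x₁`, `y₀y₁` pairwise span a non-adjacent pair (some `xᵢyⱼ` with `i ≠ j`, or a
pair involving `x₀` or `y₀`), so no clique contains two of them and every covering needs a separate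
clique for each. -/

theorem cc_eq_of_isCliqueCover {V : Type*} {G : SimpleGraph V} {𝒞 : Finset (Finset V)} {k : ℕ}
    (h𝒞 : IsCliqueCover G 𝒞) (h𝒞k : #𝒞 ≤ k) (hmin : ∀ 𝒟, IsCliqueCover G 𝒟 → k ≤ #𝒟) :
    cc G = k := by
  have h𝒞mem : #𝒞 ∈ {k | ∃ 𝒟, IsCliqueCover G 𝒟 ∧ #𝒟 = k} := ⟨𝒞, h𝒞, rfl⟩
  refine le_antisymm ((Nat.sInf_le h𝒞mem).trans h𝒞k) (le_csInf ⟨_, h𝒞mem⟩ ?_)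
  rintro _ ⟨𝒟, h𝒟, rfl⟩
  exact hmin 𝒟 h𝒟

theorem IsCliqueCover.card_le_of_pairwise_not_isClique {V ι : Type*} [Fintype ι]
    {G : SimpleGraph V} {𝒞 : Finset (Finset V)} (h𝒞 : IsCliqueCover G 𝒞) (e : ι → V × V)
    (hadj : ∀ i, G.Adj (e i).1 (e i).2)
    (hsep : Pairwise fun i j => ¬ G.IsClique ({(e i).1, (e i).2, (e j).1, (e j).2} : Set V)) :
    Fintype.card ι ≤ #𝒞 := by
  choose C hC h₁ h₂ using fun i => h𝒞.2 _ _ (hadj i)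
  refine card_le_card_of_injOn C (fun i _ => hC i) fun i _ j _ hij => ?_
  by_contra hne
  refine hsep hne ((h𝒞.1 _ (hC i)).subset ?_)
  simp only [Set.insert_subset_iff, Set.singleton_subset_iff, mem_coe]
  exact ⟨h₁ i, h₂ i, hij ▸ h₁ j, hij ▸ h₂ j⟩

namespace Gn

variable {n : ℕ}

attribute [local simp] inXx0 inYy0 inZ inXY xyPair

@[simp]
theorem adj_iff {u v : Vtx n} : (Gn n).Adj u v ↔ u ≠ v ∧ (inXx0 u ∧ inXx0 v ∨
    inYy0 u ∧ inYy0 v ∨ inZ u ∧ inZ v ∨ inZ u ∧ inXY v ∨ inXY u ∧ inZ v ∨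
    xyPair u v ∨ xyPair v u) :=
  Iff.rfl

def cliqueX (n : ℕ) : Finset (Vtx n) := insert .x0 (univ.image .x)

def cliqueY (n : ℕ) : Finset (Vtx n) := insert .y0 (univ.image .y)

def cliqueZ (i : Fin n) : Finset (Vtx n) := insert (.x i) (insert (.y i) (univ.image .z))

def cover (n : ℕ) : Finset (Finset (Vtx n)) :=
  insert (cliqueX n) (insert (cliqueY n) (univ.image cliqueZ))

theorem isCliqueCover_cover : IsCliqueCover (Gn n) (cover n) := by
  refine ⟨?_, ?_⟩
  · simp only [cover, mem_insert, mem_image, mem_univ, true_and]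
    rintro C (rfl | rfl | ⟨i, rfl⟩) a ha b hb hab <;>
      cases a <;> cases b <;> simp_all [cliqueX, cliqueY, cliqueZ]
  · intro u v huv
    cases u <;> cases v <;> simp_all [cover, cliqueX, cliqueY, cliqueZ]
    case z.z i _ => exact ⟨i⟩

theorem card_cover_le : #(cover n) ≤ n + 2 :=
  calc #(cover n) ≤ #(insert (cliqueY n) (univ.image cliqueZ)) + 1 := card_insert_le _ _
    _ ≤ #(univ.image (cliqueZ (n := n))) + 1 + 1 := by gcongr; exact card_insert_le _ _
    _ ≤ n + 2 := by grw [card_image_le, card_univ, Fintype.card_fin]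

def separatedEdge (i₀ : Fin n) : Fin n ⊕ Bool → Vtx n × Vtx n
  | .inl i => (.x i, .y i)
  | .inr true => (.x0, .x i₀)
  | .inr false => (.y0, .y i₀)

theorem le_card_of_isCliqueCover (hn : 1 ≤ n) {𝒟 : Finset (Finset (Vtx n))}
    (h𝒟 : IsCliqueCover (Gn n) 𝒟) : n + 2 ≤ #𝒟 := by
  have hadj : ∀ a, (Gn n).Adj (separatedEdge ⟨0, hn⟩ a).1 (separatedEdge ⟨0, hn⟩ a).2 := by
    rintro (i | _ | _) <;> simp [separatedEdge]
  have hsep : Pairwise fun a b => ¬ (Gn n).IsClique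
      {(separatedEdge ⟨0, hn⟩ a).1, (separatedEdge ⟨0, hn⟩ a).2,
        (separatedEdge ⟨0, hn⟩ b).1, (separatedEdge ⟨0, hn⟩ b).2} := by
    rintro (i | _ | _) (j | _ | _) hne <;>
      simp_all [separatedEdge, SimpleGraph.isClique_insert]
  simpa using h𝒟.card_le_of_pairwise_not_isClique _ hadj hsep

end Gn

/-- For every positive integer `n`, the clique cover number of `Gₙ` equals `n + 2`. -/
theorem stmt_1 (n : ℕ) (hn : 1 ≤ n) : cc (Gn n) = n + 2 :=
  cc_eq_of_isCliqueCover Gn.isCliqueCover_cover Gn.card_cover_le fun _ =>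
    Gn.le_card_of_isCliqueCover hn
end

section
/- For every positive integer n, the graph G_n has a unique clique covering consisting of exactly n + 2 cliques, namely the collection consisting of the cliques {x_i, y_i} ∪ Z for 1 ≤ i ≤ n, together with {y_0} ∪ Y and {x_0} ∪ X. -/
open Finset

/-- The clique `{x i, y i} ∪ Z` of `Gₙ`. -/
def cliqueXYZ (n : ℕ) (i : Fin n) : Finset (Vtx n) :=
  insert (Vtx.x i) (insert (Vtx.y i) (Finset.univ.image Vtx.z))

/-- The clique `{x₀} ∪ X` of `Gₙ`. -/
def cliqueX (n : ℕ) : Finset (Vtx n) := insert Vtx.x0 (Finset.univ.image Vtx.x)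

/-- The clique `{y₀} ∪ Y` of `Gₙ`. -/
def cliqueY (n : ℕ) : Finset (Vtx n) := insert Vtx.y0 (Finset.univ.image Vtx.y)

/-- The collection of cliques `{x i, y i} ∪ Z` (for `1 ≤ i ≤ n`), `{x₀} ∪ X` and `{y₀} ∪ Y`. -/
def canonicalCover (n : ℕ) : Finset (Finset (Vtx n)) :=
  (Finset.univ.image (cliqueXYZ n)) ∪ {cliqueX n, cliqueY n}

/-!
Each clique `M` of the canonical cover owns a forced edge (`x i y i`, `x₀ x₁`, `y₀ y₁`): every
clique through it lies inside `M`, and no other canonical clique contains it. The cliques of a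
cover that cover these `n + 2` edges are therefore pairwise distinct, so a cover with `n + 2`
cliques consists of them alone, each inside its own `M`. Every vertex `v` of `M` lies on an edge
that no other canonical clique contains, and the clique covering that edge can only be the one
inside `M`; hence that clique is all of `M`.
-/

section CliqueCover

variable {V : Type*} {G : SimpleGraph V}

def IsPrivateEdge (G : SimpleGraph V) (𝓜 : Finset (Finset V)) (M : Finset V) (v w : V) : Prop :=
  G.Adj v w ∧ ∀ M' ∈ 𝓜, v ∈ M' → w ∈ M' → M' = M

lemma IsPrivateEdge.symm {𝓜 : Finset (Finset V)} {M : Finset V} {v w : V}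
    (h : IsPrivateEdge G 𝓜 M v w) : IsPrivateEdge G 𝓜 M w v :=
  ⟨h.1.symm, fun M' hM' hw hv => h.2 M' hM' hv hw⟩

def HasForcedEdge (G : SimpleGraph V) (𝓜 : Finset (Finset V)) (M : Finset V) : Prop :=
  ∃ a b, IsPrivateEdge G 𝓜 M a b ∧ ∀ C : Finset V, G.IsClique (C : Set V) → a ∈ C → b ∈ C → C ⊆ M

theorem IsCliqueCover.eq_of_card_le [DecidableEq V] {𝒞 𝓜 : Finset (Finset V)}
    (h𝒞 : IsCliqueCover G 𝒞) (hcard : #𝒞 ≤ #𝓜) (hforced : ∀ M ∈ 𝓜, HasForcedEdge G 𝓜 M)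
    (hspan : ∀ M ∈ 𝓜, ∀ v ∈ M, ∃ w, IsPrivateEdge G 𝓜 M v w) : 𝒞 = 𝓜 := by
  choose! a b hab hsub using hforced
  choose! φ hφ𝒞 haφ hbφ using fun M hM => h𝒞.2 _ _ (hab M hM).1
  have hφM : ∀ M ∈ 𝓜, φ M ⊆ M := fun M hM =>
    hsub M hM _ (h𝒞.1 _ (hφ𝒞 M hM)) (haφ M hM) (hbφ M hM)
  have hinj : Set.InjOn φ 𝓜 := fun M hM M' hM' h =>
    ((hab M hM).2 M' hM' (hφM M' hM' (h ▸ haφ M hM)) (hφM M' hM' (h ▸ hbφ M hM))).symm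
  have himage : 𝓜.image φ = 𝒞 := eq_of_subset_of_card_le (image_subset_iff.2 hφ𝒞)
    (by rwa [card_image_of_injOn hinj])
  have hφ_eq : ∀ M ∈ 𝓜, φ M = M := by
    intro M hM
    refine (hφM M hM).antisymm fun v hv => ?_
    obtain ⟨w, hvw, huniq⟩ := hspan M hM v hv
    obtain ⟨C, hC, hvC, hwC⟩ := h𝒞.2 v w hvw
    rw [← himage] at hC
    obtain ⟨M', hM', rfl⟩ := mem_image.1 hC
    rwa [← huniq M' hM' (hφM M' hM' hvC) (hφM M' hM' hwC)]
  rw [← himage, image_congr hφ_eq, image_id']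

end CliqueCover

section Gn

open Vtx

variable {n : ℕ} {C M : Finset (Vtx n)} {i : Fin n} {u v : Vtx n}

@[simp] lemma mem_cliqueX : v ∈ cliqueX n ↔ v = x0 ∨ ∃ k, v = x k := by
  simp [cliqueX, eq_comm]

@[simp] lemma mem_cliqueY : v ∈ cliqueY n ↔ v = y0 ∨ ∃ k, v = y k := by
  simp [cliqueY, eq_comm]

@[simp] lemma mem_cliqueXYZ : v ∈ cliqueXYZ n i ↔ v = x i ∨ v = y i ∨ ∃ k, v = z k := by
  simp [cliqueXYZ, eq_comm]

lemma mem_canonicalCover :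
    M ∈ canonicalCover n ↔ M = cliqueX n ∨ M = cliqueY n ∨ ∃ i, M = cliqueXYZ n i := by
  simp [canonicalCover, eq_comm]

lemma gn_adj_iff : (Gn n).Adj u v ↔ u ≠ v ∧ ∃ M ∈ canonicalCover n, u ∈ M ∧ v ∈ M := by
  cases u <;> cases v <;> simp [Gn, canonicalCover, inXx0, inYy0, inZ, inXY, xyPair, eq_comm]
  case z.z k _ => exact fun _ => ⟨k⟩

lemma isCliqueCover_canonicalCover : IsCliqueCover (Gn n) (canonicalCover n) :=
  ⟨fun M hM _ hu _ hv huv => gn_adj_iff.2 ⟨huv, M, hM, hu, hv⟩, fun _ _ h => (gn_adj_iff.1 h).2⟩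

lemma card_canonicalCover : #(canonicalCover n) = n + 2 := by
  have hinj : Function.Injective (cliqueXYZ n) := fun i j h => by
    have : x i ∈ cliqueXYZ n j := h ▸ (by simp : x i ∈ cliqueXYZ n i)
    simpa using this
  rw [canonicalCover, card_union_of_disjoint, card_image_of_injective _ hinj, card_univ,
    Fintype.card_fin, card_pair (ne_of_mem_of_not_mem' (a := x0) (by simp) (by simp))]
  simp only [disjoint_left, mem_image, mem_univ, true_and, mem_insert, mem_singleton]
  rintro _ ⟨i, rfl⟩ (h | h)
  · exact ne_of_mem_of_not_mem' (a := x0) (by simp) (by simp) h.symm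
  · exact ne_of_mem_of_not_mem' (a := y0) (by simp) (by simp) h.symm

lemma eq_cliqueX_of_x0_mem (hM : M ∈ canonicalCover n) (h : x0 ∈ M) : M = cliqueX n := by
  rcases mem_canonicalCover.1 hM with rfl | rfl | ⟨i, rfl⟩ <;> simp_all

lemma eq_cliqueY_of_y0_mem (hM : M ∈ canonicalCover n) (h : y0 ∈ M) : M = cliqueY n := by
  rcases mem_canonicalCover.1 hM with rfl | rfl | ⟨i, rfl⟩ <;> simp_all

lemma eq_cliqueXYZ_of_x_mem (hM : M ∈ canonicalCover n) (hx : x i ∈ M) (hv : v ∈ M)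
    (hvX : v ∉ cliqueX n) : M = cliqueXYZ n i := by
  rcases mem_canonicalCover.1 hM with rfl | rfl | ⟨j, rfl⟩ <;> simp_all

lemma isPrivateEdge_cliqueX (hv : v ∈ cliqueX n) (hne : x0 ≠ v) :
    IsPrivateEdge (Gn n) (canonicalCover n) (cliqueX n) x0 v :=
  ⟨isCliqueCover_canonicalCover.1 _ (by simp [mem_canonicalCover]) (by simp) hv hne,
    fun _ hM h _ => eq_cliqueX_of_x0_mem hM h⟩

lemma isPrivateEdge_cliqueY (hv : v ∈ cliqueY n) (hne : y0 ≠ v) :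
    IsPrivateEdge (Gn n) (canonicalCover n) (cliqueY n) y0 v :=
  ⟨isCliqueCover_canonicalCover.1 _ (by simp [mem_canonicalCover]) (by simp) hv hne,
    fun _ hM h _ => eq_cliqueY_of_y0_mem hM h⟩

lemma isPrivateEdge_cliqueXYZ (hv : v ∈ cliqueXYZ n i) (hvX : v ∉ cliqueX n) :
    IsPrivateEdge (Gn n) (canonicalCover n) (cliqueXYZ n i) (x i) v :=
  ⟨isCliqueCover_canonicalCover.1 _ (by simp [mem_canonicalCover]) (by simp) hv
      (ne_of_mem_of_not_mem (by simp) hvX),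
    fun _ hM hx hv => eq_cliqueXYZ_of_x_mem hM hx hv hvX⟩

lemma subset_cliqueX_of_x0_mem (hC : (Gn n).IsClique (C : Set (Vtx n))) (h : x0 ∈ C) :
    C ⊆ cliqueX n := by
  intro v hv
  obtain rfl | hne := eq_or_ne x0 v
  · simp
  obtain ⟨-, M, hM, h0, hvM⟩ := gn_adj_iff.1 (hC h hv hne)
  rwa [← eq_cliqueX_of_x0_mem hM h0]

lemma subset_cliqueY_of_y0_mem (hC : (Gn n).IsClique (C : Set (Vtx n))) (h : y0 ∈ C) :
    C ⊆ cliqueY n := by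
  intro v hv
  obtain rfl | hne := eq_or_ne y0 v
  · simp
  obtain ⟨-, M, hM, h0, hvM⟩ := gn_adj_iff.1 (hC h hv hne)
  rwa [← eq_cliqueY_of_y0_mem hM h0]

lemma subset_cliqueXYZ (hC : (Gn n).IsClique (C : Set (Vtx n))) (hx : x i ∈ C) (hy : y i ∈ C) :
    C ⊆ cliqueXYZ n i := by
  intro v hv
  obtain rfl | hnex := eq_or_ne (x i) v
  · simp
  obtain rfl | hney := eq_or_ne (y i) v
  · simp
  have hxv := hC hx hv hnex
  have hyv := hC hy hv hney
  cases v <;> simp_all [Gn, inXx0, inYy0, inZ, inXY, xyPair]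

lemma hasForcedEdge_canonicalCover (hn : 1 ≤ n) (hM : M ∈ canonicalCover n) :
    HasForcedEdge (Gn n) (canonicalCover n) M := by
  rcases mem_canonicalCover.1 hM with rfl | rfl | ⟨i, rfl⟩
  · exact ⟨x0, x ⟨0, hn⟩, isPrivateEdge_cliqueX (by simp) (by simp),
      fun C hC h _ => subset_cliqueX_of_x0_mem hC h⟩
  · exact ⟨y0, y ⟨0, hn⟩, isPrivateEdge_cliqueY (by simp) (by simp),
      fun C hC h _ => subset_cliqueY_of_y0_mem hC h⟩
  · exact ⟨x i, y i, isPrivateEdge_cliqueXYZ (by simp) (by simp), fun C hC => subset_cliqueXYZ hC⟩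

lemma exists_isPrivateEdge_canonicalCover (hn : 1 ≤ n) (hM : M ∈ canonicalCover n)
    (hv : v ∈ M) : ∃ w, IsPrivateEdge (Gn n) (canonicalCover n) M v w := by
  rcases mem_canonicalCover.1 hM with rfl | rfl | ⟨i, rfl⟩
  · rcases mem_cliqueX.1 hv with rfl | ⟨_, rfl⟩
    · exact ⟨_, isPrivateEdge_cliqueX (v := x ⟨0, hn⟩) (by simp) (by simp)⟩
    · exact ⟨_, (isPrivateEdge_cliqueX hv (by simp)).symm⟩
  · rcases mem_cliqueY.1 hv with rfl | ⟨_, rfl⟩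
    · exact ⟨_, isPrivateEdge_cliqueY (v := y ⟨0, hn⟩) (by simp) (by simp)⟩
    · exact ⟨_, (isPrivateEdge_cliqueY hv (by simp)).symm⟩
  · rcases mem_cliqueXYZ.1 hv with rfl | rfl | ⟨_, rfl⟩
    · exact ⟨_, isPrivateEdge_cliqueXYZ (v := y i) (by simp) (by simp)⟩
    · exact ⟨_, (isPrivateEdge_cliqueXYZ hv (by simp)).symm⟩
    · exact ⟨_, (isPrivateEdge_cliqueXYZ hv (by simp)).symm⟩

end Gn

/-- For every positive integer `n`, the graph `Gₙ` has a unique clique covering consisting of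
exactly `n + 2` cliques, namely `{x i, y i} ∪ Z` for `1 ≤ i ≤ n`, `{x₀} ∪ X` and `{y₀} ∪ Y`. -/
theorem stmt_2 (n : ℕ) (hn : 1 ≤ n) (𝒞 : Finset (Finset (Vtx n))) :
    (IsCliqueCover (Gn n) 𝒞 ∧ 𝒞.card = n + 2) ↔ 𝒞 = canonicalCover n := by
  constructor
  · rintro ⟨h𝒞, hcard⟩
    exact h𝒞.eq_of_card_le (hcard.trans card_canonicalCover.symm).le
      (fun _ => hasForcedEdge_canonicalCover hn)
      (fun _ hM _ => exists_isPrivateEdge_canonicalCover hn hM)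
  · rintro rfl
    exact ⟨isCliqueCover_canonicalCover, card_canonicalCover⟩
end

section
/- If G is a finite simple graph with m edges, then scp(G)² / (2m + scp(G)) ≤ cp(G), where if G has no edges both sides are interpreted as 0. -/
open Finset

/-!
Take a clique partition `𝒞` of `G` with `cp G` cliques and put `S = ∑ |C|`. The ordered pairs of
distinct vertices inside the cliques are pairwise distinct oriented edges, so `∑ |C|² ≤ 2m + S`, and
Cauchy–Schwarz gives `S² ≤ cp G * (2m + S)`. Since `scp G ≤ S` and `x ↦ x² / (2m + x)` is monotone
for `x ≥ 0`, the bound follows.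
-/

namespace IsCliquePartition

variable {V : Type*} {G : SimpleGraph V} {𝒞 : Finset (Finset V)}

theorem image_toFinset_edgeFinset [Fintype V] [DecidableEq V] [DecidableRel G.Adj] :
    IsCliquePartition G (G.edgeFinset.image Sym2.toFinset) := by
  refine ⟨?_, fun u v huv => ⟨s(u, v).toFinset, ?_, ?_⟩⟩
  · simp only [mem_image, SimpleGraph.mem_edgeFinset, forall_exists_index, and_imp]
    rintro _ e he rfl
    induction e with
    | _ a b => simpa [Sym2.toFinset_mk_eq, SimpleGraph.isClique_pair] using fun _ => he
  · exact ⟨mem_image_of_mem _ (G.mem_edgeFinset.2 huv), by simp [Sym2.toFinset_mk_eq]⟩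
  · simp only [mem_image, SimpleGraph.mem_edgeFinset, and_imp, forall_exists_index]
    rintro _ e - rfl hu hv
    rw [Sym2.mem_toFinset] at hu hv
    rw [(Sym2.mem_and_mem_iff huv.ne).1 ⟨hu, hv⟩]

theorem exists_card_eq_cp [Fintype V] (G : SimpleGraph V) :
    ∃ 𝒞, IsCliquePartition G 𝒞 ∧ 𝒞.card = cp G := by
  classical
  exact Nat.sInf_mem (s := {k | ∃ 𝒞, IsCliquePartition G 𝒞 ∧ 𝒞.card = k})
    ⟨_, _, image_toFinset_edgeFinset, rfl⟩

variable [Fintype V] [DecidableRel G.Adj]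

theorem sum_card_offDiag_le [DecidableEq V] (h𝒞 : IsCliquePartition G 𝒞) :
    ∑ C ∈ 𝒞, C.offDiag.card ≤ 2 * G.edgeFinset.card := by
  have hadj {C} (hC : C ∈ 𝒞) {p : V × V} (hp : p ∈ C.offDiag) : G.Adj p.1 p.2 := by
    rw [mem_offDiag] at hp
    exact h𝒞.1 C hC hp.1 hp.2.1 hp.2.2
  rw [SimpleGraph.two_mul_card_edgeFinset, ← card_biUnion]
  · refine card_le_card (biUnion_subset.2 fun C hC p hp => ?_)
    simpa using hadj hC hp
  · intro C hC D hD hCD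
    refine disjoint_left.2 fun p hpC hpD => hCD ?_
    obtain ⟨E, -, hE⟩ := h𝒞.2 p.1 p.2 (hadj hC hpC)
    rw [mem_offDiag] at hpC hpD
    exact (hE C ⟨hC, hpC.1, hpC.2.1⟩).trans (hE D ⟨hD, hpD.1, hpD.2.1⟩).symm

theorem sum_card_sq_le (h𝒞 : IsCliquePartition G 𝒞) :
    ∑ C ∈ 𝒞, C.card ^ 2 ≤ 2 * G.edgeFinset.card + ∑ C ∈ 𝒞, C.card := by
  classical
  have hsq (C : Finset V) : C.card ^ 2 = C.offDiag.card + C.card := by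
    rw [offDiag_card, sq, Nat.sub_add_cancel (Nat.le_mul_self _)]
  simp_rw [hsq, sum_add_distrib]
  exact Nat.add_le_add_right h𝒞.sum_card_offDiag_le _

theorem sq_sum_card_le (h𝒞 : IsCliquePartition G 𝒞) :
    (∑ C ∈ 𝒞, C.card) ^ 2 ≤ 𝒞.card * (2 * G.edgeFinset.card + ∑ C ∈ 𝒞, C.card) :=
  sq_sum_le_card_mul_sum_sq.trans (Nat.mul_le_mul_left _ h𝒞.sum_card_sq_le)

end IsCliquePartition

theorem sq_div_add_le_sq_div_add {a b c : ℝ} (hc : 0 ≤ c) (ha : 0 ≤ a) (hab : a ≤ b) :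
    a ^ 2 / (c + a) ≤ b ^ 2 / (c + b) := by
  rcases ha.eq_or_lt with rfl | ha
  · rw [zero_pow two_ne_zero, zero_div]
    positivity
  rw [div_le_div_iff₀ (by positivity) (by linarith)]
  nlinarith [mul_nonneg (mul_nonneg hc (add_nonneg ha.le (ha.le.trans hab))) (sub_nonneg.2 hab),
    mul_nonneg (mul_nonneg ha.le (ha.le.trans hab)) (sub_nonneg.2 hab)]

theorem stmt_7_general {V : Type*} [Fintype V] (G : SimpleGraph V)
    [DecidableRel G.Adj] (m : ℕ) (hm : m = G.edgeFinset.card) :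
    (scp G : ℝ) ^ 2 / (2 * m + scp G) ≤ (cp G : ℝ) := by
  obtain ⟨𝒞, h𝒞, hcard⟩ := IsCliquePartition.exists_card_eq_cp G
  set S := ∑ C ∈ 𝒞, C.card
  have hscp : scp G ≤ S := Nat.sInf_le ⟨𝒞, h𝒞, rfl⟩
  have hS : (S : ℝ) ^ 2 ≤ cp G * (2 * m + S) := by
    rw [← hcard, hm]
    exact_mod_cast h𝒞.sq_sum_card_le
  calc (scp G : ℝ) ^ 2 / (2 * m + scp G)
      ≤ (S : ℝ) ^ 2 / (2 * m + S) := sq_div_add_le_sq_div_add (by positivity) (by positivity)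
        (by exact_mod_cast hscp)
    _ ≤ cp G := div_le_of_le_mul₀ (by positivity) (by positivity) hS

/-- If `G` has `m` edges, then `scp(G)² / (2m + scp(G)) ≤ cp(G)`
(if `G` has no edges both sides are `0`, as `0 / 0 = 0` in `ℝ`). -/
theorem stmt_7 {V : Type*} [Fintype V] [DecidableEq V] (G : SimpleGraph V)
    [DecidableRel G.Adj] (m : ℕ) (hm : m = G.edgeFinset.card) :
    (scp G : ℝ) ^ 2 / (2 * m + scp G) ≤ (cp G : ℝ) :=
  stmt_7_general G m hm
end

section
/- Let d ≥ 2 and let G be a finite simple graph on n vertices with no isolated vertex such that the maximum degree of the complement of G equals d − 1. Then scc(G) ≤ (e² + 1) · n · d · ⌈ln((n−1)/(d−1))⌉, where ln is the natural logarithm and ⌈·⌉ is the ceiling of the real number (n−1)/(d−1)'s natural logarithm. -/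
open Finset

/-!
Colour the vertices uniformly at random with `d` colours and keep the vertices of colour `0`
none of whose non-neighbours has colour `0`: they form a clique of expected size `n / d`.
An edge `uv` lies in this clique as soon as `u, v` get colour `0` and their at most `2(d - 1)`
non-neighbours do not, which has probability at least `d⁻² (1 - 1/d)^(2(d-1)) ≥ 1 / (e² d²)`.
After `t = ⌈e² d² ln((n-1)/(d-1))⌉` independent rounds an edge is missed with probability at
most `(d - 1) / (n - 1)`, and covering each missed edge by itself costs `2` per edge, at most
`n (d - 1)` in expectation. Some outcome is at most the expected cost `t n / d + n (d - 1)`.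
-/

open Real
open scoped BigOperators

lemma exp_neg_one_le_one_sub_inv_pow (n : ℕ) : rexp (-1) ≤ (1 - ((n : ℝ) + 1)⁻¹) ^ n := by
  have h : (1 - ((n : ℝ) + 1)⁻¹) ^ n = ((1 + (n : ℝ)⁻¹) ^ n)⁻¹ := by
    rcases n.eq_zero_or_pos with rfl | hn
    · simp
    · rw [← inv_pow]
      congr 1
      field_simp
      ring
  rw [h, exp_neg]
  exact inv_anti₀ (by positivity) one_add_inv_pow_le_exp

lemma expect_natCast_card_filter {Ω κ K : Type*} [Fintype Ω] [Semifield K] [CharZero K]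
    (s : Finset κ) (P : Ω → κ → Prop) [∀ ω k, Decidable (P ω k)] :
    𝔼 ω, (#{k ∈ s | P ω k} : K) = ∑ k ∈ s, (#{ω | P ω k} : K) / Fintype.card Ω := by
  simp_rw [natCast_card_filter]
  rw [expect_sum_comm]
  refine sum_congr rfl fun k _ => ?_
  rw [Fintype.expect_eq_sum_div_card, ← natCast_card_filter]

section Trials

variable {X : Type*} [Fintype X] [Nonempty X]

lemma expect_comp_eval {ι : Type*} [Fintype ι] [DecidableEq ι] (f : X → ℝ) (i : ι) :
    𝔼 ω : ι → X, f (ω i) = 𝔼 x, f x := by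
  have hsum := Fintype.sum_piFinset_apply f univ i
  rw [Fintype.piFinset_univ, nsmul_eq_mul] at hsum
  obtain ⟨k, hk⟩ := Nat.exists_eq_add_one_of_ne_zero (Fintype.card_pos_iff.2 ⟨i⟩).ne'
  have hX : (Fintype.card X : ℝ) ≠ 0 := by positivity
  rw [Fintype.expect_eq_sum_div_card, Fintype.expect_eq_sum_div_card, hsum, Fintype.card_fun, hk,
    card_univ, Nat.add_sub_cancel, pow_succ, Nat.cast_mul, Nat.cast_pow,
    mul_div_mul_left _ _ (pow_ne_zero _ hX)]

lemma card_forall_notMem_div_card_le_exp [DecidableEq X] {ι : Type*} [Fintype ι] [DecidableEq ι]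
    (B : Finset X) {ε : ℝ} (hB : ε * Fintype.card X ≤ #B) :
    (#{ω : ι → X | ∀ i, ω i ∉ B} : ℝ) / Fintype.card (ι → X)
      ≤ rexp (-(Fintype.card ι * ε)) := by
  have hfilter :
      ({ω : ι → X | ∀ i, ω i ∉ B} : Finset _) = Fintype.piFinset fun _ => Bᶜ := by
    ext ω
    simp
  have hX : (0 : ℝ) < Fintype.card X := by positivity
  have hBX : (#B : ℝ) ≤ Fintype.card X := by exact_mod_cast card_le_univ B
  have hmiss : ((Fintype.card X : ℝ) - #B) / Fintype.card X ≤ rexp (-ε) := by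
    refine le_trans ?_ (one_sub_le_exp_neg ε)
    rw [sub_div, div_self hX.ne']
    linarith [(le_div_iff₀ hX).2 hB]
  rw [hfilter, Fintype.card_piFinset, prod_const, card_univ, card_compl, Fintype.card_fun,
    Nat.cast_pow, Nat.cast_pow, Nat.cast_sub (card_le_univ B), ← div_pow, neg_mul_eq_mul_neg,
    exp_nat_mul]
  exact pow_le_pow_left₀ (div_nonneg (sub_nonneg.2 hBX) hX.le) hmiss _

end Trials

section Colouring

variable {V : Type*} [Fintype V] [DecidableEq V] {d : ℕ} [NeZero d]

lemma card_filter_eq_zero_on_ne_zero_on {Z N : Finset V} (hZN : Disjoint Z N) :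
    (#{g : V → Fin d | (∀ w ∈ Z, g w = 0) ∧ ∀ w ∈ N, g w ≠ 0} : ℝ)
      = (d : ℝ) ^ Fintype.card V * ((d : ℝ)⁻¹ ^ #Z * (1 - (d : ℝ)⁻¹) ^ #N) := by
  set s : V → Finset (Fin d) := fun w => if w ∈ Z then {0} else if w ∈ N then {0}ᶜ else univ
  have hs : ({g : V → Fin d | (∀ w ∈ Z, g w = 0) ∧ ∀ w ∈ N, g w ≠ 0} : Finset _)
      = Fintype.piFinset s := by
    ext g
    simp only [mem_filter, mem_univ, true_and, Fintype.mem_piFinset, s]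
    refine ⟨fun ⟨hZ, hN⟩ w => ?_, fun h => ⟨fun w hw => ?_, fun w hw => ?_⟩⟩
    · split_ifs with hwZ hwN <;> simp [*]
    · simpa [hw] using h w
    · simpa [hw, disjoint_right.1 hZN hw] using h w
  have hd : (d : ℝ) ≠ 0 := NeZero.ne _
  have hcard : ∀ w, (#(s w) : ℝ) = d *
      ((if w ∈ Z then (d : ℝ)⁻¹ else 1) * (if w ∈ N then 1 - (d : ℝ)⁻¹ else 1)) := by
    intro w
    by_cases hwZ : w ∈ Z
    · simp [s, hwZ, disjoint_left.1 hZN hwZ, hd]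
    by_cases hwN : w ∈ N
    · simp [s, hwZ, hwN, card_compl, mul_sub, hd, Nat.cast_sub NeZero.one_le]
    · simp [s, hwZ, hwN]
  rw [hs, Fintype.card_piFinset, Nat.cast_prod]
  simp_rw [hcard]
  rw [prod_mul_distrib, prod_const, card_univ, prod_mul_distrib, Fintype.prod_ite_mem,
    Fintype.prod_ite_mem, prod_const, prod_const]

end Colouring

section Cover

variable {V : Type*} [Fintype V] [DecidableEq V] (G : SimpleGraph V) [DecidableRel G.Adj]

lemma scc_le_sum_card_add_two_mul_card_uncovered {ι : Type*} [Fintype ι] (F : ι → Finset V)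
    (hF : ∀ i, G.IsClique (F i : Set V)) :
    scc G ≤ ∑ i, #(F i) + 2 * #{e ∈ G.edgeFinset | ∀ i, ¬ e.toFinset ⊆ F i} := by
  set U := {e ∈ G.edgeFinset | ∀ i, ¬ e.toFinset ⊆ F i}
  have hU : ∀ e ∈ U, e ∈ G.edgeSet := fun e he => by simpa using (mem_filter.1 he).1
  have hcover : IsCliqueCover G (univ.image F ∪ U.image Sym2.toFinset) := by
    refine ⟨fun C hC => ?_, fun u v huv => ?_⟩
    · obtain ⟨i, -, rfl⟩ | ⟨e, he, rfl⟩ := by simpa only [mem_union, mem_image] using hC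
      · exact hF i
      · induction e using Sym2.ind with | _ u v => ?_
        simpa [Sym2.toFinset_mk_eq, SimpleGraph.isClique_pair] using fun _ => hU _ he
    · by_cases h : ∃ i, s(u, v).toFinset ⊆ F i
      · obtain ⟨i, hi⟩ := h
        rw [Sym2.toFinset_mk_eq, insert_subset_iff, singleton_subset_iff] at hi
        exact ⟨F i, mem_union_left _ (mem_image_of_mem F (mem_univ i)), hi⟩
      · refine ⟨s(u, v).toFinset, mem_union_right _ (mem_image_of_mem _ ?_), by simp, by simp⟩
        simpa [U, huv] using h
  calc scc G ≤ ∑ C ∈ univ.image F ∪ U.image Sym2.toFinset, #C :=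
        Nat.sInf_le ⟨_, hcover, rfl⟩
    _ ≤ ∑ C ∈ univ.image F, #C + ∑ C ∈ U.image Sym2.toFinset, #C := by
      rw [← sum_union_inter]
      exact Nat.le_add_right _ _
    _ ≤ ∑ i, #(F i) + ∑ e ∈ U, #e.toFinset := by
      gcongr <;> exact sum_image_le_of_nonneg fun _ _ => Nat.zero_le _
    _ = ∑ i, #(F i) + 2 * #U := by
      rw [sum_congr rfl fun e he => Sym2.card_toFinset_of_not_isDiag e
        (G.not_isDiag_of_mem_edgeSet (hU e he)), sum_const, smul_eq_mul, mul_comm]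

lemma maxDegree_compl_le_card_sub_two (hiso : ∀ v, ∃ w, G.Adj v w) :
    Gᶜ.maxDegree ≤ Fintype.card V - 2 := by
  refine Gᶜ.maxDegree_le_of_forall_degree_le _ fun v => ?_
  have := G.degree_pos_iff_exists_adj v |>.2 (hiso v)
  rw [SimpleGraph.degree_compl]
  omega

end Cover

section ZeroClique

variable {V : Type*} [Fintype V] [DecidableEq V] {d : ℕ} [NeZero d]
variable (G : SimpleGraph V) [DecidableRel G.Adj]

def zeroClique (g : V → Fin d) : Finset V :=
  {v | g v = 0 ∧ ∀ w, Gᶜ.Adj v w → g w ≠ 0}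

lemma isClique_zeroClique (g : V → Fin d) : G.IsClique (zeroClique G g : Set V) := by
  intro v hv w hw hvw
  simp only [zeroClique, coe_filter, mem_univ, true_and, Set.mem_ofPred_eq] at hv hw
  by_contra hnadj
  exact hv.2 w ((G.compl_adj v w).2 ⟨hvw, hnadj⟩) hw.1

lemma expect_card_zeroClique_le :
    𝔼 g : V → Fin d, (#(zeroClique G g) : ℝ) ≤ Fintype.card V / d := by
  have hzero (v : V) :
      (#{g : V → Fin d | g v = 0} : ℝ) = d ^ Fintype.card V * (d : ℝ)⁻¹ := by
    simpa using card_filter_eq_zero_on_ne_zero_on (d := d) (disjoint_empty_right {v})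
  calc 𝔼 g : V → Fin d, (#(zeroClique G g) : ℝ)
      ≤ 𝔼 g : V → Fin d, (#{v | g v = 0} : ℝ) :=
        expect_le_expect fun g _ => by
          exact_mod_cast card_le_card <| monotone_filter_right _ fun _ _ (h : _ ∧ _) => h.1
    _ = Fintype.card V / d := by
        rw [expect_natCast_card_filter]
        have : (d : ℝ) ^ Fintype.card V ≠ 0 := pow_ne_zero _ (NeZero.ne _)
        simp [hzero, div_eq_mul_inv, mul_right_comm _ (d : ℝ)⁻¹, this]

lemma pair_subset_zeroClique_iff (g : V → Fin d) (u v : V) :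
    {u, v} ⊆ zeroClique G g ↔ (∀ w ∈ ({u, v} : Finset V), g w = 0) ∧
      ∀ w ∈ Gᶜ.neighborFinset u ∪ Gᶜ.neighborFinset v, g w ≠ 0 := by
  simp only [insert_subset_iff, singleton_subset_iff, zeroClique, mem_filter, mem_univ, true_and,
    mem_insert, mem_singleton, forall_eq_or_imp, forall_eq, mem_union,
    SimpleGraph.mem_neighborFinset]
  grind

lemma le_card_toFinset_subset_zeroClique (hΔ : Gᶜ.maxDegree < d) {e : Sym2 V}
    (he : e ∈ G.edgeSet) :
    (d : ℝ) ^ Fintype.card V * (rexp 1 ^ 2 * d ^ 2)⁻¹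
      ≤ #{g : V → Fin d | e.toFinset ⊆ zeroClique G g} := by
  induction e using Sym2.ind with | _ u v => ?_
  rw [SimpleGraph.mem_edgeSet] at he
  set N := Gᶜ.neighborFinset u ∪ Gᶜ.neighborFinset v
  have hdisj : Disjoint ({u, v} : Finset V) N := by
    simp [N, disjoint_left, G.ne_of_adj he, he, he.symm]
  have hN : #N ≤ 2 * (d - 1) := by
    refine (card_union_le _ _).trans ?_
    have := add_le_add (Gᶜ.degree_le_maxDegree u) (Gᶜ.degree_le_maxDegree v)
    simp only [SimpleGraph.card_neighborFinset_eq_degree]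
    omega
  have hd : (1 : ℝ) ≤ d := by exact_mod_cast NeZero.one_le
  have hexp : (rexp 1 ^ 2)⁻¹ ≤ (1 - (d : ℝ)⁻¹) ^ #N :=
    calc (rexp 1 ^ 2)⁻¹ = rexp (-1) ^ 2 := by rw [exp_neg, inv_pow]
      _ ≤ ((1 - (d : ℝ)⁻¹) ^ (d - 1)) ^ 2 := by
        have := exp_neg_one_le_one_sub_inv_pow (d - 1)
        rw [Nat.cast_sub NeZero.one_le, Nat.cast_one, sub_add_cancel] at this
        gcongr
      _ = (1 - (d : ℝ)⁻¹) ^ (2 * (d - 1)) := by rw [← pow_mul, mul_comm]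
      _ ≤ (1 - (d : ℝ)⁻¹) ^ #N :=
        pow_le_pow_of_le_one (sub_nonneg.2 (inv_le_one_of_one_le₀ hd))
          (sub_le_self _ (by positivity)) hN
  rw [Sym2.toFinset_mk_eq, filter_congr fun g _ => pair_subset_zeroClique_iff G g u v,
    card_filter_eq_zero_on_ne_zero_on hdisj, card_pair (G.ne_of_adj he)]
  calc (d : ℝ) ^ Fintype.card V * (rexp 1 ^ 2 * d ^ 2)⁻¹
      = d ^ Fintype.card V * ((d : ℝ)⁻¹ ^ 2 * (rexp 1 ^ 2)⁻¹) := by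
        rw [mul_inv, inv_pow]
        ring
    _ ≤ _ := by gcongr

lemma exists_zeroCliques_cost_le (hΔ : Gᶜ.maxDegree < d) (ι : Type*) [Fintype ι]
    [DecidableEq ι] :
    ∃ ω : ι → V → Fin d,
      (∑ i, #(zeroClique G (ω i)) : ℝ)
          + 2 * #{e ∈ G.edgeFinset | ∀ i, ¬ e.toFinset ⊆ zeroClique G (ω i)}
        ≤ Fintype.card ι * Fintype.card V / d + Fintype.card V * (Fintype.card V - 1)
          * rexp (-(Fintype.card ι * (rexp 1 ^ 2 * d ^ 2)⁻¹)) := by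
  set n := Fintype.card V
  set q := rexp (-(Fintype.card ι * (rexp 1 ^ 2 * d ^ 2)⁻¹))
  have hedges : 2 * (#G.edgeFinset : ℝ) ≤ n * (n - 1) := by
    have := (Nat.cast_le (α := ℝ)).2 G.card_edgeFinset_le_card_choose_two
    rw [Nat.cast_choose_two] at this
    linarith
  have hmiss (e : Sym2 V) (he : e ∈ G.edgeFinset) :
      (#{ω : ι → V → Fin d | ∀ i, ¬ e.toFinset ⊆ zeroClique G (ω i)} : ℝ)
        / Fintype.card (ι → V → Fin d) ≤ q := by
    have hB := le_card_toFinset_subset_zeroClique G hΔ (G.mem_edgeFinset.1 he)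
    have hcard : (Fintype.card (V → Fin d) : ℝ) = d ^ n := by simp [n]
    convert card_forall_notMem_div_card_le_exp _ (by rwa [hcard, mul_comm]) using 5
    simp only [mem_filter, mem_univ, true_and]
  have hexpect : 𝔼 ω : ι → V → Fin d, ((∑ i, #(zeroClique G (ω i)) : ℝ)
        + 2 * #{e ∈ G.edgeFinset | ∀ i, ¬ e.toFinset ⊆ zeroClique G (ω i)})
      ≤ Fintype.card ι * n / d + n * (n - 1) * q :=
    calc _ = ∑ i : ι, 𝔼 g : V → Fin d, (#(zeroClique G g) : ℝ)
          + 2 * ∑ e ∈ G.edgeFinset,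
            (#{ω : ι → V → Fin d | ∀ i, ¬ e.toFinset ⊆ zeroClique G (ω i)} : ℝ)
              / Fintype.card (ι → V → Fin d) := by
          rw [expect_add_distrib, ← mul_expect, expect_natCast_card_filter, expect_sum_comm]
          simp_rw [expect_comp_eval (fun g : V → Fin d => (#(zeroClique G g) : ℝ))]
      _ ≤ ∑ i : ι, (n / d : ℝ) + 2 * ∑ e ∈ G.edgeFinset, q := by
          gcongr with i _ e he
          · exact expect_card_zeroClique_le G
          · exact hmiss e he
      _ ≤ _ := by
          simp only [sum_const, card_univ, nsmul_eq_mul, ← mul_assoc]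
          rw [mul_div_assoc]
          gcongr
  obtain ⟨ω, -, hω⟩ := exists_le_of_expect_le univ_nonempty hexpect
  exact ⟨ω, hω⟩

end ZeroClique

lemma ceil_log_trials_cost_le {n d : ℝ} (hd : 1 < d) (hdn : d < n) :
    (⌈rexp 1 ^ 2 * d ^ 2 * log ((n - 1) / (d - 1))⌉₊ : ℝ) * n / d
        + n * (n - 1) * rexp (-(⌈rexp 1 ^ 2 * d ^ 2 * log ((n - 1) / (d - 1))⌉₊
          * (rexp 1 ^ 2 * d ^ 2)⁻¹))
      ≤ (rexp 1 ^ 2 + 1) * n * d * ⌈log ((n - 1) / (d - 1))⌉ := by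
  set L := log ((n - 1) / (d - 1))
  set c := rexp 1 ^ 2 * d ^ 2
  set t := ⌈c * L⌉₊
  have hc : 0 < c := by positivity
  have hL : 0 < L := log_pos ((one_lt_div (by linarith)).2 (by linarith))
  have hLceil : L ≤ ⌈L⌉ := Int.le_ceil L
  have hceil_one : (1 : ℝ) ≤ ⌈L⌉ := by exact_mod_cast Int.one_le_ceil_iff.2 hL
  have ht : (t : ℝ) ≤ c * ⌈L⌉ + 1 := by
    linarith [Nat.ceil_lt_add_one (mul_pos hc hL).le, mul_le_mul_of_nonneg_left hLceil hc.le]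
  have hn : 0 < n - 1 := by linarith
  have hmiss : rexp (-(t * c⁻¹)) ≤ (d - 1) / (n - 1) := by
    calc rexp (-(t * c⁻¹)) ≤ rexp (-L) := by
          gcongr
          rw [← div_eq_mul_inv, le_div_iff₀ hc, mul_comm]
          exact Nat.le_ceil _
      _ = (d - 1) / (n - 1) := by rw [exp_neg, exp_log (div_pos hn (by linarith)), inv_div]
  have hn0 : 0 ≤ n := by linarith
  have hnn : 0 ≤ n * (n - 1) := by nlinarith
  calc (t : ℝ) * n / d + n * (n - 1) * rexp (-(t * c⁻¹))
      ≤ (c * ⌈L⌉ + 1) * n / d + n * (n - 1) * ((d - 1) / (n - 1)) := by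
        gcongr
    _ = rexp 1 ^ 2 * n * d * ⌈L⌉ + (n / d + n * (d - 1)) := by
        simp only [c]
        field_simp
        ring
    _ ≤ rexp 1 ^ 2 * n * d * ⌈L⌉ + n * d * ⌈L⌉ := by
        gcongr
        calc n / d + n * (d - 1) ≤ n + n * (d - 1) := by
              gcongr
              exact div_le_self (by linarith) hd.le
          _ = n * d * 1 := by ring
          _ ≤ n * d * ⌈L⌉ := by gcongr
    _ = (rexp 1 ^ 2 + 1) * n * d * ⌈L⌉ := by ring

/-- If `G` is a graph on `n` vertices with no isolated vertex and `Δ(Gᶜ) = d − 1`,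
then `scc(G) ≤ (e² + 1) · n · d · ⌈ln((n−1)/(d−1))⌉`. -/
theorem stmt_9 {V : Type*} [Fintype V] [DecidableEq V] (G : SimpleGraph V)
    [DecidableRel G.Adj] (d n : ℕ) (hd : 2 ≤ d) (hn : n = Fintype.card V)
    (hiso : ∀ v : V, ∃ w, G.Adj v w) (hdeg : Gᶜ.maxDegree = d - 1) :
    (scc G : ℝ) ≤ (Real.exp 1 ^ 2 + 1) * n * d *
      (⌈Real.log (((n : ℝ) - 1) / ((d : ℝ) - 1))⌉ : ℝ) := by
  subst hn
  have : NeZero d := ⟨by omega⟩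
  have hΔ : Gᶜ.maxDegree < d := by omega
  have hdn : d < Fintype.card V := by
    have := maxDegree_compl_le_card_sub_two G hiso
    omega
  obtain ⟨ω, hω⟩ := exists_zeroCliques_cost_le G hΔ
    (Fin ⌈rexp 1 ^ 2 * d ^ 2 * log ((Fintype.card V - 1) / (d - 1))⌉₊)
  rw [Fintype.card_fin] at hω
  have hscc := scc_le_sum_card_add_two_mul_card_uncovered G _ fun i => isClique_zeroClique G (ω i)
  refine (Nat.cast_le.2 hscc).trans ?_
  push_cast
  exact hω.trans (ceil_log_trials_cost_le (by exact_mod_cast hd) (by exact_mod_cast hdn))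
end

section
/- Let n and d be positive integers with n ≥ 2d, and let G be a complete multipartite graph on n vertices whose parts all have size at most d and at least two of whose parts have size exactly d. Then the maximum degree of the complement of G equals d − 1, and scc(G) ≥ n·d. -/
open Finset

/-- If `G` is a complete multipartite graph on `n ≥ 2d` vertices with all parts of size at most
`d` and at least two parts of size exactly `d`, then `Δ(Gᶜ) = d − 1` and `scc(G) ≥ n·d`. -/
theorem stmt_11 {V ι : Type*} [Fintype V] [DecidableEq V] [DecidableEq ι]
    (G : SimpleGraph V) [DecidableRel G.Adj] (f : V → ι)
    (hAdj : ∀ u v, G.Adj u v ↔ f u ≠ f v)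
    (d n : ℕ) (hd : 1 ≤ d) (hn : n = Fintype.card V) (hnd : 2 * d ≤ n)
    (hsize : ∀ i : ι, (Finset.univ.filter fun v => f v = i).card ≤ d)
    (htwo : ∃ i j : ι, i ≠ j ∧ (Finset.univ.filter fun v => f v = i).card = d ∧
      (Finset.univ.filter fun v => f v = j).card = d) :
    Gᶜ.maxDegree = d - 1 ∧ n * d ≤ scc G := by
  classical
  obtain ⟨i, j, hij, hi, hj⟩ := htwo
  -- neighbor finset of the complement
  have hnbr : ∀ v : V, Gᶜ.neighborFinset v = (Finset.univ.filter fun u => f u = f v).erase v := by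
    intro v
    ext u
    simp only [SimpleGraph.mem_neighborFinset, SimpleGraph.compl_adj, hAdj, not_not,
      Finset.mem_erase, Finset.mem_filter, Finset.mem_univ, true_and]
    constructor
    · rintro ⟨h1, h2⟩; exact ⟨Ne.symm h1, h2.symm⟩
    · rintro ⟨h1, h2⟩; exact ⟨Ne.symm h1, h2.symm⟩
  have hdeg : ∀ v : V, Gᶜ.degree v = (Finset.univ.filter fun u => f u = f v).card - 1 := by
    intro v
    rw [← SimpleGraph.card_neighborFinset_eq_degree, hnbr v,
      Finset.card_erase_of_mem (by simp)]
  have hmax : Gᶜ.maxDegree = d - 1 := by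
    have hub : Gᶜ.maxDegree ≤ d - 1 := by
      apply SimpleGraph.maxDegree_le_of_forall_degree_le
      intro v
      rw [hdeg v]
      exact Nat.sub_le_sub_right (hsize (f v)) 1
    have hvi : ∃ v : V, f v = i := by
      have : (Finset.univ.filter fun v => f v = i).Nonempty := by
        rw [← Finset.card_pos, hi]; omega
      obtain ⟨v, hv⟩ := this
      exact ⟨v, (Finset.mem_filter.mp hv).2⟩
    obtain ⟨v, hv⟩ := hvi
    have hlb : d - 1 ≤ Gᶜ.maxDegree := by
      have : Gᶜ.degree v = d - 1 := by
        rw [hdeg v, hv, hi]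
      rw [← this]
      exact SimpleGraph.degree_le_maxDegree _ _
    exact le_antisymm hub hlb
  refine ⟨hmax, ?_⟩
  -- key lemma: every clique cover has total size at least n * d
  have key : ∀ (𝒞 : Finset (Finset V)), IsCliqueCover G 𝒞 → n * d ≤ ∑ C ∈ 𝒞, C.card := by
    rintro 𝒞 ⟨hcl, hcov⟩
    have hv : ∀ v : V, d ≤ (𝒞.filter fun C => v ∈ C).card := by
      intro v
      obtain ⟨k, hk, hkcard⟩ : ∃ k, k ≠ f v ∧ (Finset.univ.filter fun u => f u = k).card = d := by
        by_cases h : f v = i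
        · exact ⟨j, by rw [h]; exact Ne.symm hij, hj⟩
        · exact ⟨i, fun hh => h hh.symm, hi⟩
      set P := Finset.univ.filter fun u => f u = k with hP
      have hmemP : ∀ u ∈ P, f u = k := by
        intro u hu; exact (Finset.mem_filter.mp hu).2
      have hadj : ∀ u ∈ P, G.Adj v u := by
        intro u hu
        rw [hAdj]
        rw [hmemP u hu]
        exact fun hh => hk hh.symm
      have hchoice : ∀ u ∈ P, ∃ C, C ∈ 𝒞.filter (fun C => v ∈ C) ∧ u ∈ C := by
        intro u hu
        obtain ⟨C, hC, hvC, huC⟩ := hcov v u (hadj u hu)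
        exact ⟨C, Finset.mem_filter.mpr ⟨hC, hvC⟩, huC⟩
      set g : V → Finset V := fun u =>
        if h : ∃ C, C ∈ 𝒞.filter (fun C => v ∈ C) ∧ u ∈ C then h.choose else ∅ with hg
      have hgspec : ∀ u ∈ P, g u ∈ 𝒞.filter (fun C => v ∈ C) ∧ u ∈ g u := by
        intro u hu
        have h := hchoice u hu
        simp only [hg, dif_pos h]
        exact h.choose_spec
      have := Finset.card_le_card_of_injOn g (fun u hu => (hgspec u hu).1) ?_
      · rw [← hkcard]; exact this
      · intro u hu u' hu' heq
        by_contra hne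
        have h1 := hgspec u hu
        have h2 := hgspec u' hu'
        have hclique : G.IsClique (g u : Set V) :=
          hcl (g u) (Finset.mem_filter.mp h1.1).1
        have : G.Adj u u' := hclique h1.2 (heq ▸ h2.2) hne
        rw [hAdj] at this
        exact this ((hmemP u hu).trans (hmemP u' hu').symm)
    have hsum : ∑ C ∈ 𝒞, C.card = ∑ v : V, (𝒞.filter fun C => v ∈ C).card := by
      calc ∑ C ∈ 𝒞, C.card = ∑ C ∈ 𝒞, ∑ v : V, if v ∈ C then 1 else 0 := by
            refine Finset.sum_congr rfl fun C _ => ?_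
            rw [← Finset.card_filter, Finset.filter_univ_mem]
        _ = ∑ v : V, ∑ C ∈ 𝒞, if v ∈ C then 1 else 0 := Finset.sum_comm
        _ = ∑ v : V, (𝒞.filter fun C => v ∈ C).card := by
            refine Finset.sum_congr rfl fun v _ => (Finset.card_filter _ _).symm
    rw [hsum]
    calc n * d = ∑ _v : V, d := by
          rw [Finset.sum_const, smul_eq_mul, Finset.card_univ, ← hn, Nat.mul_comm]
      _ ≤ ∑ v : V, (𝒞.filter fun C => v ∈ C).card := Finset.sum_le_sum fun v _ => hv v
  -- the set defining scc is nonempty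
  have hne : {k | ∃ 𝒞, IsCliqueCover G 𝒞 ∧ ∑ C ∈ 𝒞, C.card = k}.Nonempty := by
    refine ⟨_, (Finset.univ : Finset (Finset V)).filter
      (fun C => ∀ u ∈ C, ∀ w ∈ C, u ≠ w → G.Adj u w), ⟨?_, ?_⟩, rfl⟩
    · intro C hC u hu w hw huw
      exact (Finset.mem_filter.mp hC).2 u hu w hw huw
    · intro u v huv
      refine ⟨{u, v}, ?_, by simp, by simp⟩
      simp only [Finset.mem_filter, Finset.mem_univ, true_and]
      intro a ha b hb hab
      simp only [Finset.mem_insert, Finset.mem_singleton] at ha hb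
      rcases ha with rfl | rfl <;> rcases hb with rfl | rfl
      · exact absurd rfl hab
      · exact huv
      · exact huv.symm
      · exact absurd rfl hab
  obtain ⟨𝒞, hcov, hsum⟩ := Nat.sInf_mem hne
  rw [scc, ← hsum]
  exact key 𝒞 hcov
end

section
/- Let d ≥ 1 be an integer and suppose there exists an orthogonal array OA(d, d+1), i.e., a function A : {1,...,d²} × {1,...,d+1} → {1,...,d} such that for every pair of distinct columns j ≠ j', the map sending a row i to the ordered pair (A(i,j), A(i,j')) is a bijection from {1,...,d²} to {1,...,d}². Let H be the complete (d+1)-partite graph with every part of size d. Then H has a clique partition 𝒞 in which every vertex of H lies in exactly d cliques of 𝒞; in particular scp(H) ≤ d²(d+1). -/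
open Finset

/-- The complete `(d+1)`-partite graph with every part of size `d`: vertices are pairs
`(j, a)` with `j` the part index, and two vertices are adjacent iff their parts differ. -/
def completeMultipartite (d : ℕ) : SimpleGraph (Fin (d + 1) × Fin d) where
  Adj u v := u.1 ≠ v.1
  symm := ⟨fun _ _ h => h.symm⟩
  loopless := ⟨fun _ h => h rfl⟩

/-! Each row `i` of the orthogonal array is the transversal `{(j, A i j)}` of the parts, a clique
of size `d + 1`. Orthogonality of two columns `j ≠ j'` says that every edge `(j, a)(j', b)` lies
in exactly one of these `d²` cliques, and that the `d` rows with symbol `a` in column `j` are the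
cliques through the vertex `(j, a)`. -/

theorem completeMultipartite_eq_comap (d : ℕ) :
    completeMultipartite d = (⊤ : SimpleGraph (Fin (d + 1))).comap Prod.fst := by
  ext
  rfl

theorem scp_le_sum_card {V : Type*} {G : SimpleGraph V} {𝒞 : Finset (Finset V)}
    (h𝒞 : IsCliquePartition G 𝒞) : scp G ≤ ∑ C ∈ 𝒞, #C :=
  Nat.sInf_le ⟨𝒞, h𝒞, rfl⟩

def IsOrthogonalArray {ι κ α : Type*} (A : ι → κ → α) : Prop :=
  ∀ j j' : κ, j ≠ j' → Function.Bijective fun i => (A i j, A i j')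

theorem IsOrthogonalArray.card_filter_apply_eq {ι κ α : Type*} [Fintype ι] [Fintype α]
    [DecidableEq α] {A : ι → κ → α} (hA : IsOrthogonalArray A) {j j' : κ} (hj : j ≠ j')
    (a : α) : #{i | A i j = a} = Fintype.card α := by
  have hrows := hA j j' hj
  calc #{i | A i j = a}
      = #({a} ×ˢ (univ : Finset α)) := by
        refine card_nbij (fun i => (A i j, A i j'))
          (fun i hi => mem_product.2 ⟨mem_singleton.2 (mem_filter.1 hi).2, mem_univ _⟩)
          (fun _ _ _ _ h => hrows.1 h) fun p hp => ?_
        obtain ⟨i, rfl⟩ := hrows.2 p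
        exact ⟨i, by simpa [eq_comm] using hp, rfl⟩
    _ = Fintype.card α := by simp

section rowClique

variable {ι κ α : Type*} [Fintype κ] [DecidableEq κ] [DecidableEq α]

def rowClique (A : ι → κ → α) (i : ι) : Finset (κ × α) :=
  univ.image fun j => (j, A i j)

theorem mem_rowClique {A : ι → κ → α} {i : ι} {v : κ × α} :
    v ∈ rowClique A i ↔ A i v.1 = v.2 := by
  simp only [rowClique, mem_image, mem_univ, true_and]
  exact ⟨by rintro ⟨j, rfl⟩; rfl, fun h => ⟨v.1, by rw [h]⟩⟩

theorem card_rowClique (A : ι → κ → α) (i : ι) : #(rowClique A i) = Fintype.card κ :=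
  card_image_of_injective _ fun _ _ h => congrArg Prod.fst h

theorem isClique_rowClique (A : ι → κ → α) (i : ι) :
    ((⊤ : SimpleGraph κ).comap Prod.fst).IsClique (rowClique A i : Set (κ × α)) := by
  intro u hu v hv huv hfst
  rw [mem_coe, mem_rowClique] at hu hv
  exact huv (Prod.ext hfst (by rw [← hu, ← hv, hfst]))

theorem sum_card_image_rowClique_le [Fintype ι] (A : ι → κ → α) :
    ∑ C ∈ univ.image (rowClique A), #C ≤ Fintype.card ι * Fintype.card κ := by
  calc ∑ C ∈ univ.image (rowClique A), #C
      ≤ ∑ i, #(rowClique A i) := sum_image_le_of_nonneg fun _ _ => Nat.zero_le _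
    _ = Fintype.card ι * Fintype.card κ := by simp [card_rowClique]

namespace IsOrthogonalArray

variable {A : ι → κ → α}

theorem injective_rowClique [Nontrivial κ] (hA : IsOrthogonalArray A) :
    Function.Injective (rowClique A) := by
  intro i i' h
  obtain ⟨j, j', hj⟩ := exists_pair_ne κ
  have hcol : ∀ k, A i k = A i' k := fun k =>
    (mem_rowClique.1 (h ▸ mem_rowClique.2 rfl : (k, A i k) ∈ rowClique A i')).symm
  exact (hA j j' hj).1 (by simp only [hcol])

theorem isCliquePartition [Fintype ι] (hA : IsOrthogonalArray A) :
    IsCliquePartition ((⊤ : SimpleGraph κ).comap Prod.fst) (univ.image (rowClique A)) := by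
  refine ⟨by simpa using isClique_rowClique A, fun u v huv => ?_⟩
  have hrows := hA u.1 v.1 huv
  obtain ⟨i, hi⟩ := hrows.2 (u.2, v.2)
  simp only [Prod.mk.injEq] at hi
  refine ⟨rowClique A i, ⟨mem_image_of_mem _ (mem_univ i), mem_rowClique.2 hi.1,
    mem_rowClique.2 hi.2⟩, ?_⟩
  rintro C ⟨hC, huC, hvC⟩
  obtain ⟨i', -, rfl⟩ := mem_image.1 hC
  rw [mem_rowClique] at huC hvC
  exact congrArg _ (hrows.1 (by simp only [huC, hvC, hi]))

theorem card_filter_mem_image_rowClique [Fintype ι] [Fintype α] [Nontrivial κ]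
    (hA : IsOrthogonalArray A) (v : κ × α) :
    #{C ∈ univ.image (rowClique A) | v ∈ C} = Fintype.card α := by
  obtain ⟨j', hj'⟩ := exists_ne v.1
  rw [filter_image, card_image_of_injective _ hA.injective_rowClique]
  simpa only [mem_rowClique] using hA.card_filter_apply_eq hj'.symm v.2

end IsOrthogonalArray

end rowClique

theorem stmt_13_general (d : ℕ) (A : Fin (d ^ 2) → Fin (d + 1) → Fin d)
    (hA : ∀ j j' : Fin (d + 1), j ≠ j' →
      Function.Bijective fun i : Fin (d ^ 2) => (A i j, A i j')) :
    (∃ 𝒞 : Finset (Finset (Fin (d + 1) × Fin d)),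
      IsCliquePartition (completeMultipartite d) 𝒞 ∧
      ∀ v : Fin (d + 1) × Fin d, (𝒞.filter fun C => v ∈ C).card = d) ∧
    scp (completeMultipartite d) ≤ d ^ 2 * (d + 1) := by
  have hA : IsOrthogonalArray A := hA
  rw [completeMultipartite_eq_comap]
  refine ⟨⟨univ.image (rowClique A), hA.isCliquePartition, fun v => ?_⟩, ?_⟩
  · have : Nontrivial (Fin (d + 1)) := Fin.nontrivial_iff_two_le.2 (by have := v.2.pos; omega)
    simpa using hA.card_filter_mem_image_rowClique v
  · calc scp ((⊤ : SimpleGraph (Fin (d + 1))).comap Prod.fst)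
        ≤ ∑ C ∈ univ.image (rowClique A), #C := scp_le_sum_card hA.isCliquePartition
      _ ≤ d ^ 2 * (d + 1) := by simpa using sum_card_image_rowClique_le A

/-- If there is an orthogonal array `OA(d, d+1)`, then the complete `(d+1)`-partite graph `H`
with parts of size `d` has a clique partition in which every vertex lies in exactly `d`
cliques; in particular `scp(H) ≤ d²(d+1)`. -/
theorem stmt_13 (d : ℕ) (hd : 1 ≤ d) (A : Fin (d ^ 2) → Fin (d + 1) → Fin d)
    (hA : ∀ j j' : Fin (d + 1), j ≠ j' →
      Function.Bijective fun i : Fin (d ^ 2) => (A i j, A i j')) :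
    (∃ 𝒞 : Finset (Finset (Fin (d + 1) × Fin d)),
      IsCliquePartition (completeMultipartite d) 𝒞 ∧
      ∀ v : Fin (d + 1) × Fin d, (𝒞.filter fun C => v ∈ C).card = d) ∧
    scp (completeMultipartite d) ≤ d ^ 2 * (d + 1) :=
  stmt_13_general d A hA
end

section
/- For every positive integer t, t·δ(t) ≤ scc(K_t(2)), where δ(t) = min{ k − 1 : k a positive integer with t ≤ C(k, ⌈k/2⌉) } and C(·,·) denotes the binomial coefficient. -/
open Finset

/-- The Cocktail party graph `K_t(2)`: the complete graph on `2t` vertices minus a perfect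
matching. Vertices are pairs `(i, a)`; two vertices are adjacent iff their first
coordinates differ. -/
def cocktailParty (t : ℕ) : SimpleGraph (Fin t × Fin 2) where
  Adj u v := u.1 ≠ v.1
  symm := ⟨fun _ _ h => h.symm⟩
  loopless := ⟨fun _ h => h rfl⟩

/-- `δ(t) = min { k − 1 : k ≥ 1, t ≤ C(k, ⌈k/2⌉) }`. -/
noncomputable def delta (t : ℕ) : ℕ :=
  sInf {m | ∃ k : ℕ, 1 ≤ k ∧ m = k - 1 ∧ t ≤ Nat.choose k ((k + 1) / 2)}

/-!
For a clique cover `𝒞` of `K_t(2)`, let `A i` and `B i` be the sets of cliques containing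
`(i, 0)` and `(i, 1)`. They are disjoint, and `A i ∩ B j ≠ ∅` for `i ≠ j` because the edge
`(i, 0)(j, 1)` is covered; so Bollobás's set-pair inequality gives
`∑ᵢ 1 / C(dᵢ, ⌊dᵢ/2⌋) ≤ 1` with `dᵢ = #A i + #B i`, while `∑ C ∈ 𝒞, #C = ∑ᵢ dᵢ`.
The sequence `1 / C(d, ⌊d/2⌋)` is convex for `d ≥ 1`, so its tangent line at `m = δ(t)` bounds
every term from below, and `t / C(m, ⌊m/2⌋) > 1` then forces `∑ᵢ dᵢ > t m`.
-/

theorem choose_succ_div_two (n : ℕ) : n.choose ((n + 1) / 2) = n.choose (n / 2) := by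
  obtain ⟨k, rfl | rfl⟩ := Nat.even_or_odd' n
  · congr 1; omega
  · rw [show (2 * k + 1 + 1) / 2 = k + 1 by omega, show (2 * k + 1) / 2 = k by omega,
      Nat.choose_symm_half]

theorem choose_half_two_mul_add_two (k : ℕ) :
    (2 * k + 2).choose ((2 * k + 2) / 2) = 2 * (2 * k + 1).choose ((2 * k + 1) / 2) := by
  rw [show (2 * k + 2) / 2 = k + 1 by omega, show (2 * k + 1) / 2 = k by omega,
    Nat.choose_succ_succ', Nat.choose_symm_half]; ring

theorem add_one_mul_choose_half_two_mul_add_one (k : ℕ) :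
    (k + 1) * (2 * k + 1).choose ((2 * k + 1) / 2) = (2 * k + 1) * (2 * k).choose (2 * k / 2) := by
  rw [show (2 * k + 1) / 2 = k by omega, show 2 * k / 2 = k by omega, ← Nat.choose_symm_half,
    Nat.add_one_mul_choose_eq, mul_comm]

theorem inv_choose_half_sub_succ_le (n : ℕ) (hn : 1 ≤ n) :
    (((n + 1).choose ((n + 1) / 2) : ℚ))⁻¹ - (((n + 2).choose ((n + 2) / 2) : ℚ))⁻¹ ≤
      ((n.choose (n / 2) : ℚ))⁻¹ - (((n + 1).choose ((n + 1) / 2) : ℚ))⁻¹ := by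
  obtain ⟨k, rfl | rfl⟩ := Nat.even_or_odd' n
  · rw [choose_half_two_mul_add_two k]
    have hrel : ((k : ℚ) + 1) * (2 * k + 1).choose ((2 * k + 1) / 2)
        = (2 * k + 1) * (2 * k).choose (2 * k / 2) := by
      exact_mod_cast add_one_mul_choose_half_two_mul_add_one k
    have hu : (0 : ℚ) < (2 * k).choose (2 * k / 2) := by exact_mod_cast Nat.choose_pos (by omega)
    have hk : (1 : ℚ) ≤ k := by exact_mod_cast (show 1 ≤ k by omega)
    push_cast
    generalize ((2 * k).choose (2 * k / 2) : ℚ) = u at *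
    generalize ((2 * k + 1).choose ((2 * k + 1) / 2) : ℚ) = v at *
    have hv : 0 < v := by nlinarith
    have key : 3 * v⁻¹ ≤ 2 * u⁻¹ := by
      rw [← div_eq_mul_inv, ← div_eq_mul_inv, div_le_div_iff₀ hv hu]
      nlinarith
    rw [mul_inv]
    linarith
  · rw [show 2 * k + 1 + 2 = 2 * (k + 1) + 1 by ring, show 2 * k + 1 + 1 = 2 * k + 2 by ring,
      choose_half_two_mul_add_two k]
    push_cast
    have : (0 : ℚ) ≤ (((2 * (k + 1) + 1).choose ((2 * (k + 1) + 1) / 2) : ℕ) : ℚ)⁻¹ := by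
      positivity
    rw [mul_inv]
    linarith

theorem sub_le_mul_sub_of_sub_succ_le {𝕜 : Type*} [Field 𝕜] [LinearOrder 𝕜] [IsStrictOrderedRing 𝕜]
    {f : ℕ → 𝕜} {a : ℕ} (hf : ∀ n ≥ a, f (n + 1) - f (n + 2) ≤ f n - f (n + 1))
    {m d : ℕ} (hm : a ≤ m) (hd : a ≤ d) :
    f m - f d ≤ (f m - f (m + 1)) * ((d : 𝕜) - m) := by
  have hanti : AntitoneOn (fun n => f n - f (n + 1)) {x | a ≤ x} :=
    antitoneOn_nat_Ici_of_succ_le hf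
  rcases le_total m d with hmd | hdm
  · induction d, hmd using Nat.le_induction with
    | base => simp
    | succ d hmd ih =>
      have hslope : f d - f (d + 1) ≤ f m - f (m + 1) := hanti hm (hm.trans hmd) hmd
      have := ih (hm.trans hmd)
      push_cast
      linarith
  · obtain ⟨k, rfl⟩ := Nat.exists_eq_add_of_le hdm
    clear hdm
    induction k generalizing d with
    | zero => simp
    | succ k ih =>
      have hslope : f (d + (k + 1)) - f (d + (k + 1) + 1) ≤ f d - f (d + 1) :=
        hanti hd hm (by omega)
      have := ih (d := d + 1) (by omega) (by omega)
      rw [show d + 1 + k = d + (k + 1) by ring] at this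
      push_cast at this ⊢
      linarith

theorem mul_lt_sum_of_sum_inv_choose_half_le_one {ι : Type*} (s : Finset ι) (d : ι → ℕ)
    (hd : ∀ i ∈ s, 1 ≤ d i) (hsum : ∑ i ∈ s, (((d i).choose (d i / 2) : ℕ) : ℚ)⁻¹ ≤ 1)
    {m : ℕ} (hm : 1 ≤ m) (hms : m.choose (m / 2) < #s) :
    #s * m < ∑ i ∈ s, d i := by
  set g : ℕ → ℚ := fun n => ((n.choose (n / 2) : ℕ) : ℚ)⁻¹ with hg
  have hgm_pos : (0 : ℚ) < m.choose (m / 2) := by exact_mod_cast Nat.choose_pos (by omega)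
  have hslope : 0 ≤ g m - g (m + 1) := by
    refine sub_nonneg.2 (inv_anti₀ hgm_pos ?_)
    exact_mod_cast (Nat.choose_le_succ _ _).trans (Nat.choose_le_middle _ _)
  have hgm : 1 < #s * g m := by
    rw [hg, ← div_eq_mul_inv, one_lt_div hgm_pos]
    exact_mod_cast hms
  have htangent :
      #s * g m - ∑ i ∈ s, g (d i) ≤ (g m - g (m + 1)) * (∑ i ∈ s, (d i : ℚ) - #s * m) := by
    calc #s * g m - ∑ i ∈ s, g (d i) = ∑ i ∈ s, (g m - g (d i)) := by
          rw [sum_sub_distrib, sum_const, nsmul_eq_mul]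
      _ ≤ ∑ i ∈ s, (g m - g (m + 1)) * ((d i : ℚ) - m) :=
          sum_le_sum fun i hi =>
            sub_le_mul_sub_of_sub_succ_le inv_choose_half_sub_succ_le hm (hd i hi)
      _ = _ := by rw [← mul_sum, sum_sub_distrib, sum_const, nsmul_eq_mul]
  by_contra! hle
  have : (∑ i ∈ s, (d i : ℚ)) ≤ #s * m := by exact_mod_cast hle
  nlinarith

section SetPairs
variable {α ι : Type*} [DecidableEq α]

theorem sum_inv_choose_card_erase {X A B : Finset α} (hA : A ⊆ X) (hB : B ⊆ X)
    (hAB : Disjoint A B) (hBne : B.Nonempty) :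
    ∑ x ∈ X \ A, (((#A + #(B.erase x)).choose #A : ℕ) : ℚ)⁻¹ =
      #X * (((#A + #B).choose #A : ℕ) : ℚ)⁻¹ := by
  obtain ⟨b, hb⟩ : ∃ b, #B = b + 1 := Nat.exists_eq_succ_of_ne_zero hBne.card_pos.ne'
  have hsplit : X \ A = B ∪ X \ (A ∪ B) := by
    ext x; simp only [mem_sdiff, mem_union]; constructor
    · tauto
    · rintro (h | h)
      · exact ⟨hB h, disjoint_right.1 hAB h⟩
      · tauto
  have hcard : #(X \ (A ∪ B)) + (#A + (b + 1)) = #X := by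
    rw [← hb, ← card_union_of_disjoint hAB, card_sdiff_add_card_eq_card (union_subset hA hB)]
  have hpascal : (((#A + b).choose #A : ℕ) : ℚ) * (#A + b + 1) =
      ((#A + (b + 1)).choose #A : ℕ) * (b + 1) := by
    exact_mod_cast (Nat.choose_mul_succ_eq _ _).trans (by congr 2; omega)
  have hsum_B : ∑ x ∈ B, (((#A + #(B.erase x)).choose #A : ℕ) : ℚ)⁻¹ =
      #B • (((#A + b).choose #A : ℕ) : ℚ)⁻¹ :=
    sum_eq_card_nsmul fun x hx => by rw [card_erase_of_mem hx, hb, Nat.add_sub_cancel]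
  have hsum_rest : ∑ x ∈ X \ (A ∪ B), (((#A + #(B.erase x)).choose #A : ℕ) : ℚ)⁻¹ =
      #(X \ (A ∪ B)) • (((#A + #B).choose #A : ℕ) : ℚ)⁻¹ :=
    sum_eq_card_nsmul fun x hx => by
      rw [erase_eq_of_notMem fun h => (mem_sdiff.1 hx).2 (mem_union_right _ h)]
  rw [hsplit, sum_union (disjoint_sdiff.mono_left subset_union_right), hsum_B, hsum_rest,
    ← hcard, hb]
  have hc : (0 : ℚ) < (#A + b).choose #A := by exact_mod_cast Nat.choose_pos (by omega)
  have hc' : (0 : ℚ) < (#A + (b + 1)).choose #A := by exact_mod_cast Nat.choose_pos (by omega)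
  simp only [nsmul_eq_mul]
  push_cast
  generalize (((#A + b).choose #A : ℕ) : ℚ) = c at *
  generalize (((#A + (b + 1)).choose #A : ℕ) : ℚ) = c' at *
  have hratio : (b + 1) * c⁻¹ = (#A + b + 1) * c'⁻¹ := by
    rw [← div_eq_mul_inv, ← div_eq_mul_inv, div_eq_div_iff hc.ne' hc'.ne']
    linarith
  rw [hratio]
  ring

theorem bollobas_inequality_sum_inv_choose (X : Finset α) (s : Finset ι) (A B : ι → Finset α)
    (hA : ∀ i ∈ s, A i ⊆ X) (hB : ∀ i ∈ s, B i ⊆ X) (hAB : ∀ i ∈ s, Disjoint (A i) (B i))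
    (hcross : ∀ i ∈ s, ∀ j ∈ s, i ≠ j → (A i ∩ B j).Nonempty) :
    ∑ i ∈ s, (((#(A i) + #(B i)).choose #(A i) : ℕ) : ℚ)⁻¹ ≤ 1 := by
  induction X using Finset.strongInduction generalizing s B with
  | H X ih =>
  rcases le_or_gt #s 1 with hs | hs
  · calc ∑ i ∈ s, (((#(A i) + #(B i)).choose #(A i) : ℕ) : ℚ)⁻¹ ≤ ∑ i ∈ s, (1 : ℚ) :=
          sum_le_sum fun i _ => inv_le_one_of_one_le₀ (by exact_mod_cast Nat.choose_pos (by omega))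
      _ ≤ 1 := by simpa using hs
  have hBne : ∀ i ∈ s, (B i).Nonempty := fun i hi => by
    obtain ⟨j, hj, hji⟩ := exists_mem_ne hs i
    exact (hcross j hj i hi hji).mono inter_subset_right
  have hX : (0 : ℚ) < #X := by
    obtain ⟨i, hi⟩ := card_pos.1 (zero_lt_one.trans hs)
    exact_mod_cast ((hBne i hi).mono (hB i hi)).card_pos
  -- The induction hypothesis on `X.erase x` for the pairs `(A i, B i \ {x})` with `x ∉ A i`;
  -- averaging it over `x ∈ X` gives the bound.
  have herase : ∀ x ∈ X,
      ∑ i ∈ s with x ∉ A i, (((#(A i) + #((B i).erase x)).choose #(A i) : ℕ) : ℚ)⁻¹ ≤ 1 :=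
    fun x hx => ih (X.erase x) (erase_ssubset hx) _ _
      (fun i hi => subset_erase.2 ⟨hA i (mem_filter.1 hi).1, (mem_filter.1 hi).2⟩)
      (fun i hi => erase_subset_erase x (hB i (mem_filter.1 hi).1))
      (fun i hi => (hAB i (mem_filter.1 hi).1).mono_right (erase_subset _ _))
      (fun i hi j hj hij => by
        obtain ⟨y, hy⟩ := hcross i (mem_filter.1 hi).1 j (mem_filter.1 hj).1 hij
        refine ⟨y, mem_inter.2 ⟨(mem_inter.1 hy).1, mem_erase.2 ⟨?_, (mem_inter.1 hy).2⟩⟩⟩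
        rintro rfl
        exact (mem_filter.1 hi).2 (mem_inter.1 hy).1)
  refine le_of_mul_le_mul_left ?_ hX
  calc #X * ∑ i ∈ s, (((#(A i) + #(B i)).choose #(A i) : ℕ) : ℚ)⁻¹
      = ∑ i ∈ s, ∑ x ∈ X \ A i, (((#(A i) + #((B i).erase x)).choose #(A i) : ℕ) : ℚ)⁻¹ := by
        rw [mul_sum]
        exact sum_congr rfl fun i hi =>
          (sum_inv_choose_card_erase (hA i hi) (hB i hi) (hAB i hi) (hBne i hi)).symm
    _ = ∑ x ∈ X, ∑ i ∈ s with x ∉ A i,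
          (((#(A i) + #((B i).erase x)).choose #(A i) : ℕ) : ℚ)⁻¹ :=
        sum_comm' fun i x => by simp only [mem_sdiff, mem_filter]; tauto
    _ ≤ ∑ x ∈ X, 1 := sum_le_sum herase
    _ = #X * 1 := by simp

theorem mul_lt_sum_card_add_card_of_crossIntersecting (X : Finset α) (s : Finset ι)
    (A B : ι → Finset α)
    (hA : ∀ i ∈ s, A i ⊆ X) (hB : ∀ i ∈ s, B i ⊆ X) (hAB : ∀ i ∈ s, Disjoint (A i) (B i))
    (hcross : ∀ i ∈ s, ∀ j ∈ s, i ≠ j → (A i ∩ B j).Nonempty)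
    {m : ℕ} (hm : 1 ≤ m) (hms : m.choose (m / 2) < #s) :
    #s * m < ∑ i ∈ s, (#(A i) + #(B i)) := by
  have hs : 1 < #s := by
    have := Nat.choose_pos (Nat.div_le_self m 2); omega
  refine mul_lt_sum_of_sum_inv_choose_half_le_one s _ (fun i hi => ?_) ?_ hm hms
  · obtain ⟨j, hj, hji⟩ := exists_mem_ne hs i
    have := ((hcross i hi j hj hji.symm).mono inter_subset_left).card_pos
    omega
  · refine (sum_le_sum fun i _ => inv_anti₀ ?_ ?_).trans
      (bollobas_inequality_sum_inv_choose X s A B hA hB hAB hcross)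
    · exact_mod_cast Nat.choose_pos (by omega)
    · exact_mod_cast Nat.choose_le_middle _ _

end SetPairs

theorem sum_card_eq_sum_card_filter_mem {α : Type*} [Fintype α] [DecidableEq α]
    (𝒞 : Finset (Finset α)) : ∑ C ∈ 𝒞, #C = ∑ a, #{C ∈ 𝒞 | a ∈ C} := by
  calc ∑ C ∈ 𝒞, #C = ∑ C ∈ 𝒞, ∑ a, if a ∈ C then 1 else 0 := by simp
    _ = ∑ a, #{C ∈ 𝒞 | a ∈ C} := by rw [sum_comm]; simp

theorem exists_isCliqueCover {V : Type*} [Fintype V] (G : SimpleGraph V) :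
    ∃ 𝒞, IsCliqueCover G 𝒞 := by
  classical
  refine ⟨univ.filter fun C : Finset V => G.IsClique (C : Set V), fun C hC => (mem_filter.1 hC).2,
    fun u v huv => ⟨{u, v}, mem_filter.2 ⟨mem_univ _, ?_⟩, by simp, by simp⟩⟩
  rw [coe_pair]
  exact SimpleGraph.isClique_pair.2 fun _ => huv

theorem IsCliqueCover.cocktailParty_mul_lt_sum_card {t m : ℕ} {𝒞 : Finset (Finset (Fin t × Fin 2))}
    (hcov : IsCliqueCover (cocktailParty t) 𝒞) (hm : 1 ≤ m) (hmt : m.choose (m / 2) < t) :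
    t * m < ∑ C ∈ 𝒞, #C := by
  rw [sum_card_eq_sum_card_filter_mem, Fintype.sum_prod_type]
  simp only [Fin.sum_univ_two]
  simpa using mul_lt_sum_card_add_card_of_crossIntersecting 𝒞 univ
    (fun i => {C ∈ 𝒞 | (i, 0) ∈ C}) (fun i => {C ∈ 𝒞 | (i, 1) ∈ C})
    (fun _ _ => filter_subset _ _) (fun _ _ => filter_subset _ _)
    (fun i _ => disjoint_filter.2 fun C hC h0 h1 => hcov.1 C hC h0 h1 (by simp) rfl)
    (fun i _ j _ hij => by
      obtain ⟨C, hC, h0, h1⟩ := hcov.2 (i, 0) (j, 1) hij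
      exact ⟨C, by simp [hC, h0, h1]⟩)
    hm (by simpa using hmt)

theorem choose_half_delta_lt {t : ℕ} (h : 0 < delta t) : (delta t).choose (delta t / 2) < t := by
  rw [← choose_succ_div_two]
  by_contra! hle
  exact Nat.notMem_of_lt_sInf (Nat.sub_lt h one_pos) ⟨delta t, h, rfl, hle⟩

theorem stmt_14_general (t : ℕ) : t * delta t ≤ scc (cocktailParty t) := by
  obtain hm | hm := Nat.eq_zero_or_pos (delta t)
  · simp [hm]
  obtain ⟨𝒞, h𝒞⟩ := exists_isCliqueCover (cocktailParty t)
  refine le_csInf ⟨_, 𝒞, h𝒞, rfl⟩ ?_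
  rintro _ ⟨𝒞, hcov, rfl⟩
  exact (hcov.cocktailParty_mul_lt_sum_card hm (choose_half_delta_lt hm)).le

/-- For every positive integer `t`, `t · δ(t) ≤ scc(K_t(2))`. -/
theorem stmt_14 (t : ℕ) (ht : 1 ≤ t) : t * delta t ≤ scc (cocktailParty t) :=
  stmt_14_general t
end

section
/- For every positive integer t, scc(K_t(2)) ≤ t·σ(t), where σ(t) = min{ k : k a positive integer with t ≤ C(k−1, ⌈k/2⌉) } and C(·,·) denotes the binomial coefficient. -/
open Finset

/-- `σ(t) = min { k : k ≥ 1, t ≤ C(k − 1, ⌈k/2⌉) }`. -/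
noncomputable def sigma (t : ℕ) : ℕ :=
  sInf {k | 1 ≤ k ∧ t ≤ Nat.choose (k - 1) ((k + 1) / 2)}

/-!
Give the `i`-th non-adjacent pair of `K_t(2)` a set `B i` of coordinates. Each coordinate `a`
yields a clique of size `t`, taking `(i, 0)` if `a ∈ B i` and `(i, 1)` otherwise, and these cliques
cover every edge as soon as any two of the sets cross: all four regions of their Venn diagram are
nonempty. With `k = σ(t)` coordinates, take `t` distinct `⌈k/2⌉`-subsets of the first `k - 1`
coordinates: they pairwise intersect by counting, are incomparable because they are distinct of
equal size, and all miss the last coordinate. This gives `k` cliques of size `t`.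
-/

theorem scc_le_sum_card {V : Type*} {G : SimpleGraph V} {𝒞 : Finset (Finset V)}
    (h : IsCliqueCover G 𝒞) : scc G ≤ ∑ C ∈ 𝒞, C.card :=
  Nat.sInf_le ⟨𝒞, h, rfl⟩

theorem self_le_choose_two_mul_add_one_succ (t : ℕ) : t ≤ (2 * t + 1).choose (t + 1) := by
  rw [Nat.choose_succ_succ, ← Nat.centralBinom_eq_two_mul_choose]
  exact (Nat.centralBinom_strictMono.id_le t).trans (Nat.le_add_right _ _)

theorem sigma_spec (t : ℕ) : 1 ≤ sigma t ∧ t ≤ (sigma t - 1).choose ((sigma t + 1) / 2) := by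
  refine Nat.sInf_mem (s := {k | 1 ≤ k ∧ t ≤ (k - 1).choose ((k + 1) / 2)})
    ⟨2 * t + 2, by omega, ?_⟩
  rw [show (2 * t + 2 + 1) / 2 = t + 1 by omega]
  exact self_le_choose_two_mul_add_one_succ t

namespace cocktailParty

variable {t : ℕ} {α : Type*} [DecidableEq α]

def cliqueAt (B : Fin t → Finset α) (a : α) : Finset (Fin t × Fin 2) :=
  univ.image fun i => (i, if a ∈ B i then 0 else 1)

theorem mem_cliqueAt {B : Fin t → Finset α} {a : α} {v : Fin t × Fin 2} :
    v ∈ cliqueAt B a ↔ v.2 = if a ∈ B v.1 then 0 else 1 := by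
  refine ⟨fun h => ?_, fun h => mem_image.mpr ⟨v.1, mem_univ _, Prod.ext rfl h.symm⟩⟩
  obtain ⟨i, -, rfl⟩ := mem_image.mp h
  rfl

theorem isClique_cliqueAt (B : Fin t → Finset α) (a : α) :
    (cocktailParty t).IsClique (cliqueAt B a : Set (Fin t × Fin 2)) := by
  intro u hu v hv huv hfst
  rw [mem_coe, mem_cliqueAt] at hu hv
  exact huv (Prod.ext hfst (by rw [hu, hv, hfst]))

theorem card_cliqueAt_le (B : Fin t → Finset α) (a : α) : (cliqueAt B a).card ≤ t :=
  card_image_le.trans_eq (card_fin t)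

variable [Fintype α]

theorem isCliqueCover_image_cliqueAt (B : Fin t → Finset α)
    (hB : Pairwise fun i j =>
      (B i ∩ B j).Nonempty ∧ (B i \ B j).Nonempty ∧ (B i ∪ B j)ᶜ.Nonempty) :
    IsCliqueCover (cocktailParty t) (univ.image (cliqueAt B)) := by
  refine ⟨fun C hC => ?_, fun u v huv => ?_⟩
  · obtain ⟨a, -, rfl⟩ := mem_image.mp hC
    exact isClique_cliqueAt B a
  obtain ⟨i, x⟩ := u
  obtain ⟨j, y⟩ := v
  change i ≠ j at huv
  suffices ∃ a, x = (if a ∈ B i then 0 else 1) ∧ y = (if a ∈ B j then 0 else 1) by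
    obtain ⟨a, hx, hy⟩ := this
    exact ⟨cliqueAt B a, mem_image_of_mem _ (mem_univ a),
      mem_cliqueAt.mpr hx, mem_cliqueAt.mpr hy⟩
  obtain ⟨⟨a₀₀, h₀₀⟩, ⟨a₀₁, h₀₁⟩, ⟨a₁₁, h₁₁⟩⟩ := hB huv
  obtain ⟨-, ⟨a₁₀, h₁₀⟩, -⟩ := hB huv.symm
  simp only [mem_inter, mem_sdiff, mem_compl, mem_union, not_or] at h₀₀ h₀₁ h₁₀ h₁₁
  fin_cases x <;> fin_cases y
  · exact ⟨a₀₀, by simp [h₀₀]⟩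
  · exact ⟨a₀₁, by simp [h₀₁]⟩
  · exact ⟨a₁₀, by simp [h₁₀]⟩
  · exact ⟨a₁₁, by simp [h₁₁]⟩

theorem scc_le_of_pairwise_crossing (B : Fin t → Finset α)
    (hB : Pairwise fun i j =>
      (B i ∩ B j).Nonempty ∧ (B i \ B j).Nonempty ∧ (B i ∪ B j)ᶜ.Nonempty) :
    scc (cocktailParty t) ≤ t * Fintype.card α :=
  calc scc (cocktailParty t)
      ≤ ∑ C ∈ univ.image (cliqueAt B), C.card :=
        scc_le_sum_card (isCliqueCover_image_cliqueAt B hB)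
    _ ≤ (univ.image (cliqueAt B)).card * t := by
        refine sum_le_card_nsmul _ _ _ fun C hC => ?_
        obtain ⟨a, -, rfl⟩ := mem_image.mp hC
        exact card_cliqueAt_le B a
    _ ≤ Fintype.card α * t := Nat.mul_le_mul_right t card_image_le
    _ = t * Fintype.card α := Nat.mul_comm _ _

theorem scc_le_of_injective_of_card_eq {s : ℕ} {β : Type*} [Fintype β] [DecidableEq β]
    (hβ : Fintype.card β < 2 * s) (A : Fin t → Finset β) (hA : Function.Injective A)
    (hcard : ∀ i, (A i).card = s) :
    scc (cocktailParty t) ≤ t * (Fintype.card β + 1) := by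
  rw [← Fintype.card_option]
  refine scc_le_of_pairwise_crossing (fun i => (A i).map .some) fun i j hij => ?_
  simp only [← map_inter, ← Finset.map_sdiff, map_nonempty]
  refine ⟨inter_nonempty_of_card_lt_card_add_card (subset_univ _) (subset_univ _) ?_, ?_,
    ⟨none, ?_⟩⟩
  · rwa [hcard, hcard, card_univ, ← two_mul]
  · rw [sdiff_nonempty]
    exact fun hsub => hij (hA (eq_of_subset_of_card_le hsub (by rw [hcard, hcard])))
  · simp

end cocktailParty

theorem stmt_15_general (t : ℕ) : scc (cocktailParty t) ≤ t * sigma t := by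
  obtain ⟨hk, hchoose⟩ := sigma_spec t
  set k := sigma t
  have hcard : Fintype.card (Fin t) ≤
      Fintype.card (powersetCard ((k + 1) / 2) (univ : Finset (Fin (k - 1)))) := by
    simpa using hchoose
  obtain ⟨A⟩ := Function.Embedding.nonempty_of_card_le hcard
  have := cocktailParty.scc_le_of_injective_of_card_eq (β := Fin (k - 1)) (s := (k + 1) / 2)
    (by rw [Fintype.card_fin]; omega)
    (fun i => (A i).1) (fun i j h => A.injective (Subtype.ext h))
    (fun i => (mem_powersetCard.mp (A i).2).2)
  rwa [Fintype.card_fin, Nat.sub_add_cancel hk] at this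

/-- For every positive integer `t`, `scc(K_t(2)) ≤ t · σ(t)`. -/
theorem stmt_15 (t : ℕ) (ht : 1 ≤ t) : scc (cocktailParty t) ≤ t * sigma t :=
  stmt_15_general t
end
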